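/- arXiv:2602.14789 — 10 statements merged into one kernel-verified Lean document; each statement's English description precedes it below -/
import Mathlib

section
/- Fix a ∈ (0,1), a step size η > 2, and x_0 ≠ 0. Let f_+(x) = x²/2 + x⁴/4 and f_a(x) = a·x²/2. Define the random iterates x_{t+1} = x_t − η·f'_{ξ_t}(x_t), where ξ_0, ξ_1, … are i.i.d. and each ξ_t selects f_+ or f_a with probability 1/2 each. Then E[|x_t|] → ∞ as t → ∞ (here x* = 0 is the common minimizer of f_+ and f_a). -/
/-!
On the event that the first `t` draws all select `f₊`, which has probability `2⁻ᵗ`, the iterate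
`x_t` equals `gᵗ(x₀)` for the deterministic map `g z = z - η (z + z³)`, and
`|g z| = |z| (η (1 + z²) - 1)`. So `|gᵗ(x₀)|` grows geometrically with ratio `η - 1 > 1` until it
exceeds `2`, and from then on by a factor at least `4` per step. Hence
`E|x_t| ≥ 2⁻ᵗ |gᵗ(x₀)| ≳ 2ᵗ`. Integrability is automatic: `x_t` takes values in a compact set.
-/

open MeasureTheory ProbabilityTheory Filter

lemma deriv_sq_div_two_add_pow_four_div_four (z : ℝ) :
    deriv (fun y : ℝ => y ^ 2 / 2 + y ^ 4 / 4) z = z + z ^ 3 := by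
  have h2 : DifferentiableAt ℝ (fun y : ℝ => y ^ 2 / 2) z := by fun_prop
  have h4 : DifferentiableAt ℝ (fun y : ℝ => y ^ 4 / 4) z := by fun_prop
  rw [deriv_fun_add h2 h4, deriv_div_const, deriv_div_const, deriv_pow_field, deriv_pow_field]
  ring

lemma deriv_const_mul_sq_div_two (a z : ℝ) : deriv (fun y : ℝ => a * y ^ 2 / 2) z = a * z := by
  simp [mul_div_assoc, deriv_div_const]

lemma tendsto_half_pow_mul_atTop_of_growth {u : ℕ → ℝ} {c M : ℝ} (hc : 1 < c) (hM : 0 < M)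
    (hu0 : 0 < u 0) (hgrow : ∀ t, c * u t ≤ u (t + 1))
    (hfast : ∀ t, M ≤ u t → 4 * u t ≤ u (t + 1)) :
    Tendsto (fun t => (1 / 2 : ℝ) ^ t * u t) atTop atTop := by
  have hgeom : ∀ t, c ^ t * u 0 ≤ u t := by
    intro t
    induction t with
    | zero => simp
    | succ t ih =>
      calc c ^ (t + 1) * u 0 = c * (c ^ t * u 0) := by ring
        _ ≤ c * u t := by gcongr
        _ ≤ u (t + 1) := hgrow t
  obtain ⟨T, hT⟩ : ∃ T, M ≤ u T :=
    (((tendsto_pow_atTop_atTop_of_one_lt hc).atTop_mul_const hu0).eventually_ge_atTop M).exists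
      |>.imp fun T h => h.trans (hgeom T)
  have hquad : ∀ s, 4 ^ s * u T ≤ u (s + T) := by
    intro s
    induction s with
    | zero => simp
    | succ s ih =>
      have hMs : M ≤ u (s + T) :=
        hT.trans ((le_mul_of_one_le_left (hM.le.trans hT) (one_le_pow₀ (by norm_num))).trans ih)
      calc (4 : ℝ) ^ (s + 1) * u T = 4 * (4 ^ s * u T) := by ring
        _ ≤ 4 * u (s + T) := by gcongr
        _ ≤ u (s + 1 + T) := by rw [Nat.add_right_comm]; exact hfast _ hMs
  have huT : 0 < u T := hM.trans_le hT
  rw [← tendsto_add_atTop_iff_nat T]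
  have hlim : Tendsto (fun s : ℕ => (2 : ℝ) ^ s * ((1 / 2) ^ T * u T)) atTop atTop :=
    (tendsto_pow_atTop_atTop_of_one_lt one_lt_two).atTop_mul_const (by positivity)
  refine tendsto_atTop_mono (fun s => ?_) hlim
  calc (2 : ℝ) ^ s * ((1 / 2) ^ T * u T) = (1 / 2) ^ (s + T) * (4 ^ s * u T) := by
        rw [pow_add, show (4 : ℝ) ^ s = 2 ^ s * 2 ^ s by rw [← mul_pow]; norm_num, one_div,
          inv_pow, inv_pow]
        field_simp
    _ ≤ (1 / 2) ^ (s + T) * u (s + T) := by gcongr; exact hquad s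

section BoolRecursion

variable {Ω : Type*} {ξ : ℕ → Ω → Bool} {F : Bool → ℝ → ℝ} {x : ℕ → Ω → ℝ} {x0 : ℝ}

lemma measurable_of_bool_recursion [MeasurableSpace Ω] (hF : ∀ b, Measurable (F b))
    (hξ : ∀ t, Measurable (ξ t)) (hinit : ∀ ω, x 0 ω = x0)
    (hrec : ∀ t ω, x (t + 1) ω = F (ξ t ω) (x t ω)) (t : ℕ) :
    Measurable (x t) := by
  induction t with
  | zero => simp [funext hinit]
  | succ t ih =>
    rw [funext (hrec t)]
    exact (measurable_from_prod_countable_left (f := fun p : ℝ × Bool => F p.2 p.1) hF).comp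
      (ih.prodMk (hξ t))

lemma exists_bound_of_bool_recursion (hF : ∀ b, Continuous (F b))
    (hinit : ∀ ω, x 0 ω = x0) (hrec : ∀ t ω, x (t + 1) ω = F (ξ t ω) (x t ω)) (t : ℕ) :
    ∃ B, ∀ ω, ‖x t ω‖ ≤ B := by
  induction t with
  | zero => exact ⟨‖x0‖, fun ω => by rw [hinit]⟩
  | succ t ih =>
    obtain ⟨B, hB⟩ := ih
    have hcompact : IsCompact (⋃ b, F b '' Metric.closedBall 0 B) :=
      isCompact_iUnion fun b => (isCompact_closedBall 0 B).image (hF b)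
    obtain ⟨C, hC⟩ := hcompact.isBounded.exists_norm_le
    refine ⟨C, fun ω => hC _ ?_⟩
    rw [hrec]
    exact Set.mem_iUnion.2 ⟨ξ t ω, Set.mem_image_of_mem _ (mem_closedBall_zero_iff.2 (hB ω))⟩

lemma eq_iterate_of_forall_true (hinit : ∀ ω, x 0 ω = x0)
    (hrec : ∀ t ω, x (t + 1) ω = F (ξ t ω) (x t ω)) {t : ℕ} {ω : Ω}
    (hω : ω ∈ ⋂ s ∈ Finset.range t, ξ s ⁻¹' {true}) : x t ω = (F true)^[t] x0 := by
  induction t with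
  | zero => exact hinit ω
  | succ t ih =>
    simp only [Set.mem_iInter, Finset.mem_range, Set.mem_preimage,
      Set.mem_singleton_iff] at hω ih
    rw [hrec, hω t t.lt_succ_self, ih fun s hs => hω s (hs.trans t.lt_succ_self),
      Function.iterate_succ_apply']

lemma measure_biInter_range_preimage_true [MeasurableSpace Ω] {μ : Measure Ω} {p : ENNReal}
    (hindep : iIndepFun ξ μ) (hp : ∀ t, μ {ω | ξ t ω = true} = p) (t : ℕ) :
    μ (⋂ s ∈ Finset.range t, ξ s ⁻¹' {true}) = p ^ t := by
  rw [hindep.meas_biInter fun s _ => ⟨{true}, measurableSet_singleton true, rfl⟩]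
  simp [Set.preimage, hp]

lemma half_pow_mul_abs_iterate_le_integral [MeasurableSpace Ω] {μ : Measure Ω}
    [IsProbabilityMeasure μ] (hF : ∀ b, Continuous (F b)) (hξ : ∀ t, Measurable (ξ t))
    (hindep : iIndepFun ξ μ) (hdist : ∀ t, μ {ω | ξ t ω = true} = 1 / 2)
    (hinit : ∀ ω, x 0 ω = x0) (hrec : ∀ t ω, x (t + 1) ω = F (ξ t ω) (x t ω)) (t : ℕ) :
    (1 / 2 : ℝ) ^ t * |(F true)^[t] x0| ≤ ∫ ω, |x t ω| ∂μ := by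
  set A := ⋂ s ∈ Finset.range t, ξ s ⁻¹' {true}
  have hA : MeasurableSet A :=
    .biInter (Set.to_countable _) fun s _ => hξ s (measurableSet_singleton true)
  obtain ⟨B, hB⟩ := exists_bound_of_bool_recursion hF hinit hrec t
  have hmeas_x := measurable_of_bool_recursion (fun b => (hF b).measurable) hξ hinit hrec t
  have hint : Integrable (fun ω => |x t ω|) μ :=
    .of_bound hmeas_x.abs.aestronglyMeasurable B (.of_forall fun ω => by simpa using hB ω)
  calc (1 / 2 : ℝ) ^ t * |(F true)^[t] x0| = ∫ _ in A, |(F true)^[t] x0| ∂μ := by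
        rw [setIntegral_const, measureReal_def, measure_biInter_range_preimage_true hindep hdist,
          smul_eq_mul]
        simp [ENNReal.toReal_pow]
    _ = ∫ ω in A, |x t ω| ∂μ :=
        setIntegral_congr_fun hA fun ω hω => by rw [eq_iterate_of_forall_true hinit hrec hω]
    _ ≤ ∫ ω, |x t ω| ∂μ := setIntegral_le_integral hint (.of_forall fun ω => abs_nonneg _)

end BoolRecursion

lemma abs_sub_mul_add_cube {η : ℝ} (hη : 1 ≤ η) (z : ℝ) :
    |z - η * (z + z ^ 3)| = |z| * (η * (1 + z ^ 2) - 1) := by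
  rw [show z - η * (z + z ^ 3) = -(z * (η * (1 + z ^ 2) - 1)) by ring, abs_neg, abs_mul,
    abs_of_nonneg (show 0 ≤ η * (1 + z ^ 2) - 1 by nlinarith [sq_nonneg z])]

lemma sub_one_mul_abs_le_abs_sub_mul_add_cube {η : ℝ} (hη : 1 ≤ η) (z : ℝ) :
    (η - 1) * |z| ≤ |z - η * (z + z ^ 3)| := by
  rw [abs_sub_mul_add_cube hη]
  nlinarith [abs_nonneg z,
    mul_nonneg (mul_nonneg (zero_le_one.trans hη) (abs_nonneg z)) (sq_nonneg z)]

lemma four_mul_abs_le_abs_sub_mul_add_cube {η z : ℝ} (hη : 1 ≤ η) (hz : 2 ≤ |z|) :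
    4 * |z| ≤ |z - η * (z + z ^ 3)| := by
  rw [abs_sub_mul_add_cube hη, mul_comm]
  have hz2 : 4 ≤ z ^ 2 := by nlinarith [sq_abs z]
  gcongr
  nlinarith

theorem stmt3_general {Ω : Type*} [MeasurableSpace Ω] (μ : Measure Ω) [IsProbabilityMeasure μ]
    (a : ℝ) (η : ℝ) (hη : 2 < η) (x0 : ℝ) (hx0 : x0 ≠ 0)
    (ξ : ℕ → Ω → Bool) (hmeas : ∀ t, Measurable (ξ t))
    (hindep : iIndepFun ξ μ)
    (hdist : ∀ t, μ {ω | ξ t ω = true} = 1 / 2)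
    (x : ℕ → Ω → ℝ) (hinit : ∀ ω, x 0 ω = x0)
    (hstep : ∀ t ω, x (t + 1) ω = x t ω -
      η * deriv (if ξ t ω then fun y : ℝ => y ^ 2 / 2 + y ^ 4 / 4
                 else fun y : ℝ => a * y ^ 2 / 2) (x t ω)) :
    Tendsto (fun t : ℕ => ∫ ω, |x t ω - 0| ∂μ) atTop atTop := by
  set F : Bool → ℝ → ℝ := fun b =>
    if b then fun z => z - η * (z + z ^ 3) else fun z => z - η * (a * z)
  have hF : ∀ b, Continuous (F b) := by
    intro b; cases b <;> simp only [F, Bool.false_eq_true, ↓reduceIte] <;> fun_prop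
  have hrec : ∀ t ω, x (t + 1) ω = F (ξ t ω) (x t ω) := by
    intro t ω
    rw [hstep]
    cases ξ t ω <;> simp only [F, Bool.false_eq_true, ↓reduceIte,
      deriv_sq_div_two_add_pow_four_div_four, deriv_const_mul_sq_div_two]
  simp only [sub_zero]
  refine tendsto_atTop_mono (half_pow_mul_abs_iterate_le_integral hF hmeas hindep hdist hinit hrec)
    (tendsto_half_pow_mul_atTop_of_growth (c := η - 1) (by linarith) two_pos (abs_pos.2 hx0) ?_ ?_)
  · intro t
    simpa [Function.iterate_succ_apply', F] using
      sub_one_mul_abs_le_abs_sub_mul_add_cube (by linarith) _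
  · intro t ht
    simpa [Function.iterate_succ_apply', F] using
      four_mul_abs_le_abs_sub_mul_add_cube (by linarith) ht

/-- **Divergence in expectation of SGD governed by a single unstable batch (Prop. 1).**
Fix `a ∈ (0,1)`, `η > 2` and `x₀ ≠ 0`.  SGD with batch size 1 on
`L = (f₊ + f_a)/2`, where `f₊(x) = x²/2 + x⁴/4` and `f_a(x) = a x²/2`, picks at
each step one of the two losses uniformly and independently and takes a gradient
step on it.  Then `E[|x_t|] → ∞` (the common minimizer being `x* = 0`). -/
theorem stmt3 {Ω : Type*} [MeasurableSpace Ω] (μ : Measure Ω) [IsProbabilityMeasure μ]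
    (a : ℝ) (ha0 : 0 < a) (ha1 : a < 1) (η : ℝ) (hη : 2 < η) (x0 : ℝ) (hx0 : x0 ≠ 0)
    (ξ : ℕ → Ω → Bool) (hmeas : ∀ t, Measurable (ξ t))
    (hindep : iIndepFun ξ μ)
    (hdist : ∀ t, μ {ω | ξ t ω = true} = 1 / 2)
    (x : ℕ → Ω → ℝ) (hinit : ∀ ω, x 0 ω = x0)
    (hstep : ∀ t ω, x (t + 1) ω = x t ω -
      η * deriv (if ξ t ω then fun y : ℝ => y ^ 2 / 2 + y ^ 4 / 4
                 else fun y : ℝ => a * y ^ 2 / 2) (x t ω)) :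
    Tendsto (fun t : ℕ => ∫ ω, |x t ω - 0| ∂μ) atTop atTop :=
  stmt3_general μ a η hη x0 hx0 ξ hmeas hindep hdist x hinit hstep
end

section
/- Let f_1, …, f_n : ℝ^d → ℝ be twice differentiable and let x* be an interpolating minimizer, i.e., ∇f_i(x*) = 0 and ∇²f_i(x*) is positive definite for every i. Fix a batch size B, step size η > 0, and initial point x_0 ∈ ℝ^d. Let B* be a fixed batch of size B, and let x_t^{(B*)} denote the deterministic GD iterates on L̂_{B*} with step size η starting from x_0, i.e., x_{t+1}^{(B*)} = x_t^{(B*)} − η∇L̂_{B*}(x_t^{(B*)}). If ‖x_t^{(B*)} − x*‖^{1/t} → ∞ as t → ∞, then the SGD iterates x_t with step size η starting from x_0 satisfy E[‖x_t − x*‖] → ∞ as t → ∞. -/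
/-!
With probability `(n.choose B)⁻¹ ^ t` the first `t` batches all equal `B*`, and on that event
the SGD iterate `x_t` is the GD iterate `x_t^{(B*)}`. Hence
`E‖x_t − x*‖ ≥ (n.choose B)⁻¹ ^ t · ‖x_t^{(B*)} − x*‖`, which tends to infinity because
`‖x_t^{(B*)} − x*‖` eventually exceeds `c ^ t` for every `c`. The expectation is a genuine
integral since `x_t` takes only finitely many values.
-/

open MeasureTheory ProbabilityTheory Filter
open scoped ENNReal

/-- Discrete measurable structure on batches (finite sets of sample indices). -/
instance finsetMeasurableSpace {α : Type*} : MeasurableSpace (Finset α) := ⊤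

/-- The batch loss `L̂_B(x) = (1/B) ∑_{i ∈ B} f_i(x)`. -/
noncomputable def batchLoss {n d : ℕ} (f : Fin n → EuclideanSpace ℝ (Fin d) → ℝ) (B : ℕ)
    (S : Finset (Fin n)) (x : EuclideanSpace ℝ (Fin d)) : ℝ :=
  (B : ℝ)⁻¹ * ∑ i ∈ S, f i x

section RangeFactorization

variable {α β γ E : Type*} [MeasurableSpace α] [MeasurableSpace β] [MeasurableSpace γ]
  [MeasurableSingletonClass β] {f : α → β}

theorem Measurable.comp_of_countable_range (hf : Measurable f) (hr : (Set.range f).Countable)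
    (g : β → γ) : Measurable (g ∘ f) :=
  have : Countable (Set.range f) := hr.to_subtype
  (measurable_of_countable (g ∘ Subtype.val : Set.range f → γ)).comp
    (hf.subtype_mk (h := Set.mem_range_self))

theorem Integrable.comp_of_finite_range [NormedAddCommGroup E] {μ : Measure α}
    [IsFiniteMeasure μ] (hf : Measurable f) (hr : (Set.range f).Finite) (g : β → E) :
    Integrable (g ∘ f) μ :=
  have : Finite (Set.range f) := hr.to_subtype
  (Integrable.of_finite (f := (g ∘ Subtype.val : Set.range f → E))).comp_measurable
    (hf.subtype_mk (h := Set.mem_range_self))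

end RangeFactorization

section BatchRecursion

variable {Ω β E : Type*} (b : ℕ → Ω → β) (g : β → E → E) (x : ℕ → Ω → E)

theorem finite_range_of_batch_recursion [Finite β] (x0 : E) (hinit : ∀ ω, x 0 ω = x0)
    (hstep : ∀ t ω, x (t + 1) ω = g (b t ω) (x t ω)) (t : ℕ) : (Set.range (x t)).Finite := by
  induction t with
  | zero => exact (Set.finite_singleton x0).subset (Set.range_subset_iff.2 hinit)
  | succ t ih =>
    refine ((Set.finite_univ.prod ih).image (Function.uncurry g)).subset ?_
    rintro _ ⟨ω, rfl⟩
    exact ⟨(b t ω, x t ω), ⟨trivial, ω, rfl⟩, (hstep t ω).symm⟩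

theorem measurable_of_batch_recursion [MeasurableSpace Ω] [MeasurableSpace β] [Finite β]
    [MeasurableSingletonClass β] [MeasurableSpace E] [MeasurableSingletonClass E]
    (hb : ∀ t, Measurable (b t)) (x0 : E) (hinit : ∀ ω, x 0 ω = x0)
    (hstep : ∀ t ω, x (t + 1) ω = g (b t ω) (x t ω)) (t : ℕ) : Measurable (x t) := by
  induction t with
  | zero => simpa only [funext hinit] using measurable_const
  | succ t ih =>
    have hpair : (Set.range fun ω => (b t ω, x t ω)).Countable :=
      ((Set.finite_univ.prod (finite_range_of_batch_recursion b g x x0 hinit hstep t)).subset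
        (Set.range_subset_iff.2 fun ω => ⟨trivial, ω, rfl⟩)).countable
    rw [show x (t + 1) = Function.uncurry g ∘ fun ω => (b t ω, x t ω) from funext (hstep t)]
    exact ((hb t).prodMk ih).comp_of_countable_range hpair _

theorem eq_of_forall_batch_eq {S : β} (y : ℕ → E) (h0 : ∀ ω, x 0 ω = y 0)
    (hstep : ∀ t ω, x (t + 1) ω = g (b t ω) (x t ω)) (hy : ∀ t, y (t + 1) = g S (y t)) (t : ℕ) :
    ∀ ω ∈ ⋂ s ∈ Finset.range t, b s ⁻¹' {S}, x t ω = y t := by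
  induction t with
  | zero => exact fun ω _ => h0 ω
  | succ t ih =>
    intro ω hω
    simp only [Finset.range_add_one, Finset.mem_insert, Set.iInter_iInter_eq_or_left,
      Set.mem_inter_iff, Set.mem_preimage, Set.mem_singleton_iff] at hω
    rw [hstep, hω.1, ih ω hω.2, hy]

end BatchRecursion

theorem ProbabilityTheory.iIndepFun.measure_iInter_preimage_singleton
    {Ω β : Type*} [MeasurableSpace Ω] [MeasurableSpace β] [MeasurableSingletonClass β]
    {μ : Measure Ω} {X : ℕ → Ω → β} (hX : iIndepFun X μ) {b : β} {p : ℝ≥0∞}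
    (hp : ∀ s, μ (X s ⁻¹' {b}) = p) (t : ℕ) :
    μ (⋂ s ∈ Finset.range t, X s ⁻¹' {b}) = p ^ t := by
  rw [iIndepFun_iff_measure_inter_preimage_eq_mul.1 hX _ fun _ _ => measurableSet_singleton b]
  simp [hp]

theorem measureReal_mul_le_integral_of_eqOn {Ω : Type*} [MeasurableSpace Ω] {μ : Measure Ω}
    {F : Ω → ℝ} {A : Set Ω} {c : ℝ} (hF : Integrable F μ) (hF0 : 0 ≤ F)
    (hA : MeasurableSet A) (hFA : Set.EqOn F (fun _ => c) A) :
    μ.real A * c ≤ ∫ ω, F ω ∂μ :=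
  calc μ.real A * c = ∫ ω in A, F ω ∂μ := by
        rw [setIntegral_congr_fun hA hFA, setIntegral_const, smul_eq_mul]
    _ ≤ ∫ ω, F ω ∂μ := setIntegral_le_integral hF (ae_of_all _ hF0)

theorem tendsto_pow_mul_atTop_of_tendsto_rpow_inv {a : ℕ → ℝ} (ha : ∀ t, 0 ≤ a t)
    (h : Tendsto (fun t : ℕ => a t ^ (1 / (t : ℝ))) atTop atTop) {q : ℝ} (hq : 0 < q) :
    Tendsto (fun t : ℕ => q ^ t * a t) atTop atTop := by
  refine tendsto_atTop_mono' _ ?_ (tendsto_pow_atTop_atTop_of_one_lt one_lt_two)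
  filter_upwards [h.eventually_ge_atTop (2 / q), eventually_ne_atTop 0] with t ht ht0
  have hroot : a t = (a t ^ (1 / (t : ℝ))) ^ t := by
    rw [← Real.rpow_natCast, ← Real.rpow_mul (ha t), one_div_mul_cancel (by exact_mod_cast ht0),
      Real.rpow_one]
  calc (2 : ℝ) ^ t = q ^ t * (2 / q) ^ t := by rw [← mul_pow, mul_div_cancel₀ _ hq.ne']
    _ ≤ q ^ t * a t := by rw [hroot]; gcongr

theorem stmt4_general {n d B : ℕ} (hBn : B ≤ n)
    (f : Fin n → EuclideanSpace ℝ (Fin d) → ℝ)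
    (xstar : EuclideanSpace ℝ (Fin d))
    (η : ℝ) (x0 : EuclideanSpace ℝ (Fin d))
    (Bstar : Finset (Fin n)) (hBstar : Bstar.card = B)
    (y : ℕ → EuclideanSpace ℝ (Fin d)) (hy0 : y 0 = x0)
    (hystep : ∀ t, y (t + 1) = y t - η • gradient (batchLoss f B Bstar) (y t))
    (hdiv : Tendsto (fun t : ℕ => ‖y t - xstar‖ ^ (1 / (t : ℝ))) atTop atTop)
    {Ω : Type*} [MeasurableSpace Ω] (μ : Measure Ω) [IsProbabilityMeasure μ]
    (Bt : ℕ → Ω → Finset (Fin n)) (hmeas : ∀ t, Measurable (Bt t))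
    (hindep : iIndepFun Bt μ)
    (hunif : ∀ t (S : Finset (Fin n)), μ {ω | Bt t ω = S} =
      if S.card = B then ((n.choose B : ℝ≥0∞))⁻¹ else 0)
    (x : ℕ → Ω → EuclideanSpace ℝ (Fin d)) (hinit : ∀ ω, x 0 ω = x0)
    (hstep : ∀ t ω, x (t + 1) ω = x t ω - η • gradient (batchLoss f B (Bt t ω)) (x t ω)) :
    Tendsto (fun t : ℕ => ∫ ω, ‖x t ω - xstar‖ ∂μ) atTop atTop := by
  set g := fun S z => z - η • gradient (batchLoss f B S) z
  set A := fun t => ⋂ s ∈ Finset.range t, Bt s ⁻¹' {Bstar}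
  have hq : 0 < ((n.choose B : ℝ))⁻¹ := by simpa using Nat.choose_pos hBn
  have hμA (t : ℕ) : μ.real (A t) = ((n.choose B : ℝ))⁻¹ ^ t := by
    have hp (s : ℕ) : μ (Bt s ⁻¹' {Bstar}) = ((n.choose B : ℝ≥0∞))⁻¹ :=
      (hunif s Bstar).trans (if_pos hBstar)
    rw [Measure.real, hindep.measure_iInter_preimage_singleton hp, ENNReal.toReal_pow,
      ENNReal.toReal_inv, ENNReal.toReal_natCast]
  have hint (t : ℕ) : Integrable (fun ω => ‖x t ω - xstar‖) μ :=
    Integrable.comp_of_finite_range (measurable_of_batch_recursion Bt g x hmeas x0 hinit hstep t)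
      (finite_range_of_batch_recursion Bt g x x0 hinit hstep t) (‖· - xstar‖)
  have hlow (t : ℕ) : ((n.choose B : ℝ))⁻¹ ^ t * ‖y t - xstar‖ ≤ ∫ ω, ‖x t ω - xstar‖ ∂μ := by
    rw [← hμA]
    refine measureReal_mul_le_integral_of_eqOn (hint t) (fun _ => norm_nonneg _)
      (Finset.measurableSet_biInter _ fun s _ => hmeas s (measurableSet_singleton _)) ?_
    intro ω hω
    simp only [eq_of_forall_batch_eq Bt g x y (by simp [hinit, hy0]) hstep hystep t ω hω]
  exact tendsto_atTop_mono hlow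
    (tendsto_pow_mul_atTop_of_tendsto_rpow_inv (fun _ => norm_nonneg _) hdiv hq)

/-- **Necessary condition for stability of SGD (Theorem 2).**
Let `x*` be an interpolating minimizer of twice differentiable losses
`f₁, …, f_n`.  If GD with step size `η` on the fixed batch loss `L̂_{B*}` diverges
superlinearly from `x*` (i.e. `‖x_t^{(B*)} − x*‖^{1/t} → ∞`), then the SGD
iterates with uniformly random size-`B` batches, started at the same `x₀`,
diverge in expectation: `E[‖x_t − x*‖] → ∞`. -/
theorem stmt4 {n d B : ℕ} (hB : 0 < B) (hBn : B ≤ n)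
    (f : Fin n → EuclideanSpace ℝ (Fin d) → ℝ) (hf : ∀ i, ContDiff ℝ 2 (f i))
    (xstar : EuclideanSpace ℝ (Fin d))
    (hgrad : ∀ i, gradient (f i) xstar = 0)
    (hhess : ∀ i (u : EuclideanSpace ℝ (Fin d)), u ≠ 0 →
      0 < iteratedFDeriv ℝ 2 (f i) xstar ![u, u])
    (η : ℝ) (hη : 0 < η) (x0 : EuclideanSpace ℝ (Fin d))
    (Bstar : Finset (Fin n)) (hBstar : Bstar.card = B)
    (y : ℕ → EuclideanSpace ℝ (Fin d)) (hy0 : y 0 = x0)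
    (hystep : ∀ t, y (t + 1) = y t - η • gradient (batchLoss f B Bstar) (y t))
    (hdiv : Tendsto (fun t : ℕ => ‖y t - xstar‖ ^ (1 / (t : ℝ))) atTop atTop)
    {Ω : Type*} [MeasurableSpace Ω] (μ : Measure Ω) [IsProbabilityMeasure μ]
    (Bt : ℕ → Ω → Finset (Fin n)) (hmeas : ∀ t, Measurable (Bt t))
    (hindep : iIndepFun Bt μ)
    (hunif : ∀ t (S : Finset (Fin n)), μ {ω | Bt t ω = S} =
      if S.card = B then ((n.choose B : ℝ≥0∞))⁻¹ else 0)
    (x : ℕ → Ω → EuclideanSpace ℝ (Fin d)) (hinit : ∀ ω, x 0 ω = x0)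
    (hstep : ∀ t ω, x (t + 1) ω = x t ω - η • gradient (batchLoss f B (Bt t ω)) (x t ω)) :
    Tendsto (fun t : ℕ => ∫ ω, ‖x t ω - xstar‖ ∂μ) atTop atTop :=
  stmt4_general hBn f xstar η x0 Bstar hBstar y hy0 hystep hdiv μ Bt hmeas hindep hunif x hinit
    hstep
end

section
/- Let f_1, …, f_n : ℝ^d → ℝ be real-analytic and let x* be an interpolating minimizer, i.e., ∇f_i(x*) = 0 and ∇²f_i(x*) is positive definite for every i. Fix a batch size B and a step size η > 0 satisfying η < min over all size-B batches B of 2/λ_max(∇²L̂_B(x*)). Then there exists ρ > 0 such that for every initial point x_0 with ‖x_0 − x*‖ < ρ, the SGD iterates x_t with step size η satisfy ρ^{−k}·E[‖x_t − x*‖_k^k] → 0 as t → ∞ for every even positive integer k, where ‖y‖_k^k = Σ_{i=1}^d |y_i|^k. -/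
/-!
Since `∇L̂_S(x*) = 0`, the SGD map `y ↦ y - η ∇L̂_S(y)` of each batch `S` fixes `x*`, and its
derivative there, `I - η ∇²L̂_S(x*)`, is self-adjoint with Rayleigh quotients
`1 - η ⟪∇²L̂_S(x*) u, u⟫ ∈ (-1, 1)` on unit vectors, so its norm is `< 1`. By continuity of the
derivative and finiteness of the set of batches, all these maps contract a common ball
`closedBall x* ρ` by a common factor `c < 1`. Almost surely every batch has size `B`, so the
iterates stay in the ball and `‖x_t - x*‖ ≤ cᵗ ρ`; hence `ρ⁻ᵏ E ‖x_t - x*‖ₖᵏ ≤ d (cᵏ)ᵗ → 0`.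
-/

open MeasureTheory ProbabilityTheory Filter
open scoped ENNReal

open Topology Metric InnerProductSpace

theorem ContinuousLinearMap.norm_lt_one_of_abs_inner_self_lt_one {E : Type*}
    [NormedAddCommGroup E] [InnerProductSpace ℝ E] [FiniteDimensional ℝ E]
    {T : E →L[ℝ] E} (hT : T.IsSymmetric) (h : ∀ u, ‖u‖ = 1 → |⟪T u, u⟫_ℝ| < 1) : ‖T‖ < 1 := by
  nontriviality E
  obtain ⟨u₀, hu₀, hmax⟩ := (isCompact_sphere (0 : E) 1).exists_isMaxOn
    (NormedSpace.sphere_nonempty.mpr zero_le_one)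
    (by fun_prop : Continuous fun u => |⟪T u, u⟫_ℝ|).continuousOn
  have hu₀ : ‖u₀‖ = 1 := by simpa using hu₀
  refine (T.norm_eq_iSup_rayleighQuotient hT).trans_lt
    ((ciSup_le fun x => ?_).trans_lt (h u₀ hu₀))
  rcases eq_or_ne x 0 with rfl | hx
  · simp
  have hunit : ‖‖x‖⁻¹ • x‖ = 1 := by simp [norm_smul, hx]
  rw [← T.rayleigh_smul x (inv_ne_zero (norm_ne_zero_iff.mpr hx)), rayleighQuotient,
    reApplyInnerSelf_apply, hunit]
  simpa only [Set.mem_ofPred_eq, RCLike.re_to_real, one_pow, div_one] using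
    hmax (by simpa using hunit)

section GradientStep

variable {E : Type*} [NormedAddCommGroup E] [InnerProductSpace ℝ E] [CompleteSpace E]

noncomputable def gradientStep (L : E → ℝ) (η : ℝ) (y : E) : E := y - η • gradient L y

variable {L : E → ℝ} {η : ℝ}

theorem ContDiff.gradientStep (hL : ContDiff ℝ 2 L) : ContDiff ℝ 1 (gradientStep L η) :=
  contDiff_id.sub <| contDiff_const.smul <|
    (toDual ℝ E).symm.contDiff.comp (hL.fderiv_right le_rfl)

theorem inner_fderiv_gradientStep_apply (hL : ContDiff ℝ 2 L) (x u v : E) :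
    ⟪fderiv ℝ (gradientStep L η) x u, v⟫_ℝ = ⟪u, v⟫_ℝ - η * iteratedFDeriv ℝ 2 L x ![u, v] := by
  have hgrad : HasFDerivAt (gradient L)
      ((toDual ℝ E).symm.toContinuousLinearEquiv.toContinuousLinearMap ∘L
        fderiv ℝ (fderiv ℝ L) x) x :=
    (toDual ℝ E).symm.toContinuousLinearEquiv.hasFDerivAt.comp x
      ((hL.fderiv_right le_rfl).differentiable one_ne_zero x).hasFDerivAt
  have hstep : HasFDerivAt (gradientStep L η) _ x := (hasFDerivAt_id x).sub (hgrad.const_smul η)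
  rw [hstep.fderiv]
  simp [iteratedFDeriv_two_apply, inner_sub_left, real_inner_smul_left, toDual_symm_apply]

theorem norm_fderiv_gradientStep_lt_one [FiniteDimensional ℝ E] (hL : ContDiff ℝ 2 L)
    (hη : 0 < η) {x : E} (hpos : ∀ u, ‖u‖ = 1 → 0 < iteratedFDeriv ℝ 2 L x ![u, u])
    (hlt : ∀ u, ‖u‖ = 1 → η * iteratedFDeriv ℝ 2 L x ![u, u] < 2) :
    ‖fderiv ℝ (gradientStep L η) x‖ < 1 := by
  have hsymm : IsSymmSndFDerivAt ℝ L x := hL.contDiffAt.isSymmSndFDerivAt (by simp)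
  refine ContinuousLinearMap.norm_lt_one_of_abs_inner_self_lt_one (fun u v => ?_) fun u hu => ?_
  · rw [ContinuousLinearMap.coe_coe, real_inner_comm (fderiv ℝ _ x v),
      inner_fderiv_gradientStep_apply hL, inner_fderiv_gradientStep_apply hL, real_inner_comm,
      hsymm.iteratedFDeriv_cons]
  · rw [inner_fderiv_gradientStep_apply hL, real_inner_self_eq_norm_sq, hu, abs_lt]
    constructor <;> nlinarith [hpos u hu, hlt u hu]

end GradientStep

theorem exists_uniform_contraction_of_norm_fderiv_lt_one {E ι : Type*} [NormedAddCommGroup E]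
    [NormedSpace ℝ E] [Finite ι] {g : ι → E → E} {x : E} (hg : ∀ i, ContDiff ℝ 1 (g i))
    (hfix : ∀ i, g i x = x) (hlt : ∀ i, ‖fderiv ℝ (g i) x‖ < 1) :
    ∃ c ∈ Set.Ioo (0 : ℝ) 1, ∃ ρ > 0, ∀ i, ∀ y ∈ closedBall x ρ,
      dist (g i y) x ≤ c * dist y x := by
  obtain ⟨c, hc, hc0, hgc⟩ : ∃ c < (1 : ℝ), 0 < c ∧ ∀ i, ‖fderiv ℝ (g i) x‖ < c :=
    ((eventually_nhdsWithin_of_forall fun _ h => h).and <|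
      ((lt_mem_nhds one_pos).and (eventually_all.2 fun i => lt_mem_nhds (hlt i))).filter_mono
        nhdsWithin_le_nhds).exists (f := 𝓝[<] (1 : ℝ))
  have hnear : ∀ᶠ y in 𝓝 x, ∀ i, ‖fderiv ℝ (g i) y‖ < c := eventually_all.2 fun i =>
    ((hg i).continuous_fderiv one_ne_zero).norm.continuousAt.eventually (gt_mem_nhds (hgc i))
  obtain ⟨ε, hε, hball⟩ := eventually_nhds_iff_ball.1 hnear
  refine ⟨c, ⟨hc0, hc⟩, ε / 2, half_pos hε, fun i y hy => ?_⟩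
  have hsub : closedBall x (ε / 2) ⊆ ball x ε := closedBall_subset_ball (half_lt_self hε)
  simpa only [dist_eq_norm, hfix] using
    (convex_closedBall x (ε / 2)).norm_image_sub_le_of_norm_fderiv_le
      (fun z _ => (hg i).differentiable one_ne_zero z) (fun z hz => (hball z (hsub hz) i).le)
      (mem_closedBall_self (half_pos hε).le) hy

theorem dist_le_pow_mul_of_contraction {X : Type*} [PseudoMetricSpace X] {y : ℕ → X} {x : X}
    {c ρ : ℝ} (hc0 : 0 ≤ c) (hc1 : c ≤ 1) (h0 : dist (y 0) x ≤ ρ)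
    (hstep : ∀ t, dist (y t) x ≤ ρ → dist (y (t + 1)) x ≤ c * dist (y t) x) (t : ℕ) :
    dist (y t) x ≤ c ^ t * dist (y 0) x := by
  induction t with
  | zero => simp
  | succ t ih =>
    have hρ : dist (y t) x ≤ ρ :=
      ih.trans <| (mul_le_of_le_one_left dist_nonneg (pow_le_one₀ hc0 hc1)).trans h0
    calc dist (y (t + 1)) x ≤ c * dist (y t) x := hstep t hρ
      _ ≤ c * (c ^ t * dist (y 0) x) := mul_le_mul_of_nonneg_left ih hc0
      _ = c ^ (t + 1) * dist (y 0) x := by ring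

theorem sum_abs_pow_le_card_mul_norm_pow {ι : Type*} [Fintype ι] (y : EuclideanSpace ℝ ι)
    (k : ℕ) :
    ∑ i, |y i| ^ k ≤ Fintype.card ι * ‖y‖ ^ k := by
  calc ∑ i, |y i| ^ k ≤ ∑ _i : ι, ‖y‖ ^ k :=
        Finset.sum_le_sum fun i _ => pow_le_pow_left₀ (abs_nonneg _) (PiLp.norm_apply_le y i) k
    _ = Fintype.card ι * ‖y‖ ^ k := by simp

theorem tendsto_moment_of_ae_norm_le_geometric {Ω ι : Type*} [MeasurableSpace Ω] [Fintype ι]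
    {μ : Measure Ω} [IsProbabilityMeasure μ] {X : ℕ → Ω → EuclideanSpace ℝ ι} {c ρ : ℝ}
    (hc0 : 0 ≤ c) (hc1 : c < 1) (hρ : 0 < ρ) (hX : ∀ᵐ ω ∂μ, ∀ t, ‖X t ω‖ ≤ c ^ t * ρ) {k : ℕ}
    (hk : 0 < k) :
    Tendsto (fun t => (ρ ^ k)⁻¹ * ∫ ω, ∑ i, |X t ω i| ^ k ∂μ) atTop (𝓝 0) := by
  have hbound (t : ℕ) :
      (ρ ^ k)⁻¹ * ∫ ω, ∑ i, |X t ω i| ^ k ∂μ ≤ Fintype.card ι * (c ^ k) ^ t := by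
    have hpt : ∀ᵐ ω ∂μ, ‖∑ i, |X t ω i| ^ k‖ ≤ Fintype.card ι * (c ^ t * ρ) ^ k :=
      hX.mono fun ω hω => by
        rw [Real.norm_of_nonneg (by positivity)]
        exact (sum_abs_pow_le_card_mul_norm_pow _ k).trans (by gcongr; exact hω t)
    have hint : ∫ ω, ∑ i, |X t ω i| ^ k ∂μ ≤ Fintype.card ι * (c ^ t * ρ) ^ k :=
      (le_abs_self _).trans (by simpa using norm_integral_le_of_norm_le_const hpt)
    calc (ρ ^ k)⁻¹ * ∫ ω, ∑ i, |X t ω i| ^ k ∂μ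
        ≤ (ρ ^ k)⁻¹ * (Fintype.card ι * (c ^ t * ρ) ^ k) := by gcongr
      _ = Fintype.card ι * (c ^ k) ^ t := by
        rw [mul_pow, ← pow_mul, ← pow_mul, mul_comm t k]; field_simp
  refine squeeze_zero (fun t => by positivity) hbound ?_
  simpa using (tendsto_pow_atTop_nhds_zero_of_lt_one (by positivity)
    (pow_lt_one₀ hc0 hc1 hk.ne')).const_mul (Fintype.card ι : ℝ)

theorem ae_of_measure_eq_zero_of_not {Ω α : Type*} [MeasurableSpace Ω] [Countable α]
    {μ : Measure Ω} {X : Ω → α} {p : α → Prop} (h : ∀ a, ¬ p a → μ {ω | X ω = a} = 0) :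
    ∀ᵐ ω ∂μ, p (X ω) :=
  measure_mono_null (fun ω hω => Set.mem_iUnion.2 ⟨⟨X ω, hω⟩, rfl⟩)
    (measure_iUnion_null fun a : {a // ¬ p a} => h a a.2)

section BatchLoss

variable {n d B : ℕ} {f : Fin n → EuclideanSpace ℝ (Fin d) → ℝ} {S : Finset (Fin n)}
  {x : EuclideanSpace ℝ (Fin d)}

theorem contDiff_batchLoss {k : WithTop ℕ∞} (hf : ∀ i, ContDiff ℝ k (f i)) :
    ContDiff ℝ k (batchLoss f B S) :=
  contDiff_const.mul (ContDiff.sum fun i _ => hf i)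

theorem gradient_batchLoss_eq_zero (hf : ∀ i, DifferentiableAt ℝ (f i) x)
    (hgrad : ∀ i, gradient (f i) x = 0) : gradient (batchLoss f B S) x = 0 := by
  have hzero (i : Fin n) : HasFDerivAt (f i) (0 : EuclideanSpace ℝ (Fin d) →L[ℝ] ℝ) x := by
    simpa [hgrad i] using hasGradientAt_iff_hasFDerivAt.1 (hf i).hasGradientAt
  have hbatch := (HasFDerivAt.fun_sum (u := S) fun i _ => hzero i).const_mul (B : ℝ)⁻¹
  simp only [Finset.sum_const_zero, smul_zero] at hbatch
  exact HasGradientAt.gradient (hasGradientAt_iff_hasFDerivAt.2 (by rw [map_zero]; exact hbatch))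

theorem iteratedFDeriv_batchLoss {k : ℕ} (hf : ∀ i, ContDiff ℝ k (f i)) :
    iteratedFDeriv ℝ k (batchLoss f B S) x =
      (B : ℝ)⁻¹ • ∑ i ∈ S, iteratedFDeriv ℝ k (f i) x := by
  change iteratedFDeriv ℝ k (fun y => (B : ℝ)⁻¹ • ∑ i ∈ S, f i y) x = _
  rw [iteratedFDeriv_const_smul_apply' (ContDiff.sum fun i _ => hf i).contDiffAt,
    iteratedFDeriv_fun_sum_apply fun i _ => (hf i).contDiffAt]

theorem iteratedFDeriv_two_batchLoss_pos (hB : 0 < B) (hS : S.Nonempty)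
    (hf : ∀ i, ContDiff ℝ 2 (f i)) {u : EuclideanSpace ℝ (Fin d)}
    (hpos : ∀ i, 0 < iteratedFDeriv ℝ 2 (f i) x ![u, u]) :
    0 < iteratedFDeriv ℝ 2 (batchLoss f B S) x ![u, u] := by
  rw [iteratedFDeriv_batchLoss hf]
  simpa using mul_pos (inv_pos.2 (Nat.cast_pos.2 hB)) (Finset.sum_pos (fun i _ => hpos i) hS)

end BatchLoss

theorem stmt5_general {n d B : ℕ} (hB : 0 < B)
    (f : Fin n → EuclideanSpace ℝ (Fin d) → ℝ)
    (hf : ∀ i, AnalyticOnNhd ℝ (f i) Set.univ)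
    (xstar : EuclideanSpace ℝ (Fin d))
    (hgrad : ∀ i, gradient (f i) xstar = 0)
    (hhess : ∀ i (u : EuclideanSpace ℝ (Fin d)), u ≠ 0 →
      0 < iteratedFDeriv ℝ 2 (f i) xstar ![u, u])
    (η : ℝ) (hη : 0 < η)
    (hstab : ∀ S : Finset (Fin n), S.card = B → ∀ u : EuclideanSpace ℝ (Fin d), ‖u‖ = 1 →
      η * iteratedFDeriv ℝ 2 (batchLoss f B S) xstar ![u, u] < 2) :
    ∃ ρ > (0 : ℝ), ∀ x0 : EuclideanSpace ℝ (Fin d), ‖x0 - xstar‖ < ρ →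
      ∀ (Ω : Type) (_ : MeasurableSpace Ω) (μ : Measure Ω), IsProbabilityMeasure μ →
      ∀ Bt : ℕ → Ω → Finset (Fin n), (∀ t, Measurable (Bt t)) →
        iIndepFun Bt μ →
        (∀ t (S : Finset (Fin n)), μ {ω | Bt t ω = S} =
          if S.card = B then ((n.choose B : ℝ≥0∞))⁻¹ else 0) →
      ∀ x : ℕ → Ω → EuclideanSpace ℝ (Fin d), (∀ ω, x 0 ω = x0) →
        (∀ t ω, x (t + 1) ω = x t ω - η • gradient (batchLoss f B (Bt t ω)) (x t ω)) →
      ∀ k : ℕ, Even k → 0 < k →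
        Tendsto (fun t : ℕ => (ρ ^ k)⁻¹ * ∫ ω, ∑ i, |(x t ω - xstar) i| ^ k ∂μ)
          atTop (nhds 0) := by
  have hfC (i : Fin n) : ContDiff ℝ 2 (f i) := (hf i).contDiff
  have hL (S : Finset (Fin n)) : ContDiff ℝ 2 (batchLoss f B S) := contDiff_batchLoss hfC
  have hfix (S : Finset (Fin n)) : gradientStep (batchLoss f B S) η xstar = xstar := by
    simp [gradientStep,
      gradient_batchLoss_eq_zero (fun i => (hfC i).differentiable two_ne_zero _) hgrad]
  have hlin (S : {S : Finset (Fin n) // S.card = B}) :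
      ‖fderiv ℝ (gradientStep (batchLoss f B S) η) xstar‖ < 1 :=
    norm_fderiv_gradientStep_lt_one (hL S) hη
      (fun u hu => iteratedFDeriv_two_batchLoss_pos hB (Finset.card_pos.1 (S.2.symm ▸ hB)) hfC
        fun i => hhess i u (by rintro rfl; simp at hu))
      (hstab S S.2)
  obtain ⟨c, ⟨hc0, hc1⟩, ρ, hρ, hcontr⟩ := exists_uniform_contraction_of_norm_fderiv_lt_one
    (g := fun S : {S : Finset (Fin n) // S.card = B} => gradientStep (batchLoss f B S) η)
    (fun S => (hL S).gradientStep) (fun S => hfix S) hlin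
  refine ⟨ρ, hρ, fun x0 hx0 Ω _ μ _ Bt _ _ hdist x hx0' hrec k _ hk => ?_⟩
  have hcard : ∀ᵐ ω ∂μ, ∀ t, (Bt t ω).card = B := ae_all_iff.2 fun t =>
    ae_of_measure_eq_zero_of_not (X := Bt t) (p := fun S => S.card = B) fun S hS => by
      simp [hdist, hS]
  refine tendsto_moment_of_ae_norm_le_geometric hc0.le hc1 hρ (hcard.mono fun ω hω t => ?_) hk
  have h0 : dist (x 0 ω) xstar ≤ ρ := by rw [hx0', dist_eq_norm]; exact hx0.le
  rw [← dist_eq_norm]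
  calc dist (x t ω) xstar ≤ c ^ t * dist (x 0 ω) xstar :=
        dist_le_pow_mul_of_contraction (y := fun t => x t ω) hc0.le hc1.le h0
          (fun s hs => by rw [hrec]; exact hcontr ⟨Bt s ω, hω s⟩ _ hs) t
    _ ≤ c ^ t * ρ := by gcongr

/-- **Sufficient condition for stability of SGD (Theorem 3).**
Let `x*` be an interpolating minimizer of real-analytic losses `f₁, …, f_n` and
suppose the step size `η` is linearly stable for every size-`B` batch, i.e.
`η < 2 / λmax(∇²L̂_S(x*))` for every batch `S` (expressed via the quadratic form
of the Hessian on unit vectors).  Then there is `ρ > 0` such that for every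
initial point with `‖x₀ − x*‖ < ρ`, the SGD iterates with uniformly random
batches satisfy `ρ^{−k} E[‖x_t − x*‖_k^k] → 0` for every even `k > 0`, where
`‖y‖_k^k = ∑ i |y_i|^k`. -/
theorem stmt5 {n d B : ℕ} (hB : 0 < B) (hBn : B ≤ n)
    (f : Fin n → EuclideanSpace ℝ (Fin d) → ℝ)
    (hf : ∀ i, AnalyticOnNhd ℝ (f i) Set.univ)
    (xstar : EuclideanSpace ℝ (Fin d))
    (hgrad : ∀ i, gradient (f i) xstar = 0)
    (hhess : ∀ i (u : EuclideanSpace ℝ (Fin d)), u ≠ 0 →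
      0 < iteratedFDeriv ℝ 2 (f i) xstar ![u, u])
    (η : ℝ) (hη : 0 < η)
    (hstab : ∀ S : Finset (Fin n), S.card = B → ∀ u : EuclideanSpace ℝ (Fin d), ‖u‖ = 1 →
      η * iteratedFDeriv ℝ 2 (batchLoss f B S) xstar ![u, u] < 2) :
    ∃ ρ > (0 : ℝ), ∀ x0 : EuclideanSpace ℝ (Fin d), ‖x0 - xstar‖ < ρ →
      ∀ (Ω : Type) (_ : MeasurableSpace Ω) (μ : Measure Ω), IsProbabilityMeasure μ →
      ∀ Bt : ℕ → Ω → Finset (Fin n), (∀ t, Measurable (Bt t)) →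
        iIndepFun Bt μ →
        (∀ t (S : Finset (Fin n)), μ {ω | Bt t ω = S} =
          if S.card = B then ((n.choose B : ℝ≥0∞))⁻¹ else 0) →
      ∀ x : ℕ → Ω → EuclideanSpace ℝ (Fin d), (∀ ω, x 0 ω = x0) →
        (∀ t ω, x (t + 1) ω = x t ω - η • gradient (batchLoss f B (Bt t ω)) (x t ω)) →
      ∀ k : ℕ, Even k → 0 < k →
        Tendsto (fun t : ℕ => (ρ ^ k)⁻¹ * ∫ ω, ∑ i, |(x t ω - xstar) i| ^ k ∂μ)
          atTop (nhds 0) :=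
  stmt5_general hB f hf xstar hgrad hhess η hη hstab
end

section
/- Let h_1, …, h_n > 0, x* ∈ ℝ, and let B_t be i.i.d. batches drawn uniformly from the size-B subsets of {1,…,n}. Consider the linearized SGD iterates x̃_{t+1} = x̃_t − (η/B)·Σ_{i∈B_t} h_i·(x̃_t − x*) with step size η > 0. Define h = (1/n)Σ_{i=1}^n h_i, s² = (1/n)Σ_{i=1}^n (h_i − h)², and p = (n − B)/(B(n − 1)). Then for every initial point x̃_0, the sequence E[(x̃_t − x*)²] is bounded in t if and only if η ≤ 2h/(h² + p·s²). -/
/-!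
Unrolling the recursion gives `x̃_t - x* = (x̃_0 - x*) ∏_{s<t} (1 - (η/B) S_s)`, where `S_s` is the
curvature sum over the batch `B_s`. By independence of the batches,
`E[(x̃_t - x*)²] = (x̃_0 - x*)² aᵗ` with `a = E[(1 - (η/B) S)²] = 1 - 2ηh + η² E[S²]/B²`,
so the second moment stays bounded iff `a ≤ 1`, i.e. iff `η E[S²]/B² ≤ 2h`. Counting the
`B`-subsets that contain a given pair of indices yields the finite-population formula
`E[S²] = B²h² + B(n - B)/(n - 1) s²`, that is `E[S²]/B² = h² + p s²`.
-/

open MeasureTheory ProbabilityTheory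
open scoped ENNReal

open Finset

-- This is about `finsetMeasurableSpace`, which takes precedence over `Finset.instMeasurableSpace`.
instance finsetDiscreteMeasurableSpace {α : Type*} : DiscreteMeasurableSpace (Finset α) :=
  ⟨fun _ => trivial⟩

section Counting

variable {α : Type*} [DecidableEq α]

-- Stated multiplicatively so that it also covers `k < #s`, where both sides vanish.
theorem card_filter_powersetCard_subset_mul_descFactorial (s t : Finset α) (k : ℕ)
    (hst : s ⊆ t) :
    #{S ∈ t.powersetCard k | s ⊆ S} * (#t).descFactorial #s =
      (#t).choose k * k.descFactorial #s := by
  by_cases hsk : #s ≤ k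
  · rw [card_filter_powersetCard_subset s t k hst hsk, Nat.descFactorial_eq_factorial_mul_choose,
      Nat.descFactorial_eq_factorial_mul_choose, mul_left_comm ((#t).choose k),
      Nat.choose_mul hsk]
    ring
  · rw [Nat.descFactorial_eq_zero_iff_lt.2 (not_le.1 hsk), mul_zero, mul_eq_zero, card_eq_zero,
      filter_eq_empty_iff]
    exact Or.inl fun S hS hsS => hsk ((card_le_card hsS).trans (mem_powersetCard.1 hS).2.le)

theorem cast_card_filter_powersetCard_subset (s t : Finset α) (k : ℕ) (hst : s ⊆ t) :
    (#{S ∈ t.powersetCard k | s ⊆ S} : ℝ) =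
      (#t).choose k * k.descFactorial #s / (#t).descFactorial #s := by
  have hpos : ((#t).descFactorial #s : ℝ) ≠ 0 :=
    Nat.cast_ne_zero.2 (Nat.descFactorial_pos.2 (card_le_card hst)).ne'
  rw [eq_div_iff hpos]
  exact_mod_cast card_filter_powersetCard_subset_mul_descFactorial s t k hst

end Counting

theorem sum_sum_eq_sum_card_filter_smul {ι β M : Type*} [Fintype β] [DecidableEq β]
    [AddCommMonoid M] (P : Finset ι) (t : ι → Finset β) (F : β → M) :
    ∑ S ∈ P, ∑ x ∈ t S, F x = ∑ x, #{S ∈ P | x ∈ t S} • F x := by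
  simp_rw [card_eq_sum_ones, sum_smul, one_smul, sum_filter]
  rw [sum_comm]
  refine sum_congr rfl fun S _ => ?_
  rw [← sum_filter, filter_mem_eq_inter, univ_inter]

section UniformSubset

variable {α : Type*} [Fintype α]
open Fintype (card)

section Moments

variable [DecidableEq α]

theorem sum_powersetCard_sum (f : α → ℝ) (k : ℕ) :
    ∑ S ∈ powersetCard k univ, ∑ i ∈ S, f i =
      (card α).choose k * (k / card α) * ∑ i, f i := by
  rw [sum_sum_eq_sum_card_filter_smul, mul_sum]
  refine sum_congr rfl fun i _ => ?_
  have hcount : #{S ∈ powersetCard k univ | i ∈ S} = #{S ∈ powersetCard k univ | {i} ⊆ S} := by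
    simp only [singleton_subset_iff]
  rw [nsmul_eq_mul, hcount, cast_card_filter_powersetCard_subset _ _ _ (subset_univ _)]
  simp only [card_singleton, Nat.descFactorial_one, card_univ]
  ring

theorem sum_powersetCard_sq_sum (f : α → ℝ) (k : ℕ) :
    ∑ S ∈ powersetCard k univ, (∑ i ∈ S, f i) ^ 2 =
      (card α).choose k * (k * (k - 1) / (card α * (card α - 1)) * (∑ i, f i) ^ 2 +
        (k / card α - k * (k - 1) / (card α * (card α - 1))) * ∑ i, f i ^ 2) := by
  set c₁ : ℝ := (card α).choose k * (k / card α)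
  set c₂ : ℝ := (card α).choose k * (k * (k - 1) / (card α * (card α - 1)))
  have hsq (S : Finset α) : (∑ i ∈ S, f i) ^ 2 = ∑ p ∈ S ×ˢ S, f p.1 * f p.2 := by
    rw [sq, sum_mul_sum, sum_product]
  have hcount (i j : α) :
      (#{S ∈ powersetCard k univ | (i, j) ∈ S ×ˢ S} : ℝ) = c₂ + if i = j then c₁ - c₂ else 0 := by
    have hpair : #{S ∈ powersetCard k univ | (i, j) ∈ S ×ˢ S} =
        #{S ∈ powersetCard k univ | {i, j} ⊆ S} := by
      simp only [mem_product, insert_subset_iff, singleton_subset_iff]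
    rw [hpair, cast_card_filter_powersetCard_subset _ _ _ (subset_univ _), card_univ]
    split_ifs with hij
    · subst hij
      simp only [insert_eq_self.2 (mem_singleton_self i), card_singleton, Nat.descFactorial_one, c₁]
      ring
    · simp only [card_pair hij, Nat.cast_descFactorial_two, c₂]
      ring
  rw [sum_congr rfl fun S _ => hsq S]
  simp_rw [sum_sum_eq_sum_card_filter_smul, Fintype.sum_prod_type, nsmul_eq_mul, hcount,
    add_mul, sum_add_distrib, ite_mul, zero_mul, sum_ite_eq, mem_univ, if_true]
  simp only [← mul_sum, ← sum_mul, ← sq, c₁, c₂]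
  ring

theorem sum_powersetCard_sq_sum_eq_mean_var (f : α → ℝ) {k : ℕ} (hk : k ≤ card α) :
    ∑ S ∈ powersetCard k univ, (∑ i ∈ S, f i) ^ 2 =
      (card α).choose k * (k ^ 2 * (((∑ i, f i) / card α) ^ 2 +
        (card α - k) / (k * (card α - 1)) *
          ((∑ i, (f i - (∑ j, f j) / card α) ^ 2) / card α))) := by
  rw [sum_powersetCard_sq_sum]
  congr 1
  have hvar : ∑ i, (f i - (∑ j, f j) / card α) ^ 2 = ∑ i, f i ^ 2 - (∑ i, f i) ^ 2 / card α := by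
    simp only [sub_sq, sum_add_distrib, sum_sub_distrib, ← sum_mul, ← mul_sum, sum_const,
      card_univ, nsmul_eq_mul]
    rcases eq_or_ne (card α : ℝ) 0 with hn | hn
    · simp [hn]
    · field_simp
      ring
  rw [hvar]
  obtain hn | hn := le_or_gt 2 (card α)
  · have hn₁ : (card α : ℝ) - 1 ≠ 0 := by
      have : (2 : ℝ) ≤ card α := by exact_mod_cast hn
      linarith
    rcases Nat.eq_zero_or_pos k with rfl | hk₀
    · simp
    have : (k : ℝ) ≠ 0 := by positivity
    field_simp
    ring
  -- For `card α ≤ 1` the divisions by `card α - 1` are junk, but then `k ≤ 1`.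
  · obtain rfl | rfl : k = 0 ∨ k = 1 := by omega
    · simp
    · obtain ⟨a, ha⟩ := card_eq_one.1 (show #(univ : Finset α) = 1 by rw [card_univ]; omega)
      have h1 : card α = 1 := by rw [← card_univ, ha, card_singleton]
      simp [ha, h1]

end Moments

theorem integral_comp_eq_sum_powersetCard_div {Ω : Type*} [MeasurableSpace Ω] {μ : Measure Ω}
    [IsFiniteMeasure μ] {X : Ω → Finset α} (hX : Measurable X) {k : ℕ}
    (hunif : ∀ S, μ {ω | X ω = S} = if #S = k then ((card α).choose k : ℝ≥0∞)⁻¹ else 0)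
    (F : Finset α → ℝ) :
    ∫ ω, F (X ω) ∂μ = (∑ S ∈ powersetCard k univ, F S) / (card α).choose k := by
  rw [← integral_map hX.aemeasurable Measurable.of_discrete.aestronglyMeasurable,
    integral_fintype .of_finite, powersetCard_eq_filter, powerset_univ, sum_filter, sum_div]
  refine sum_congr rfl fun S _ => ?_
  rw [measureReal_def, Measure.map_apply hX (.singleton S)]
  change (μ {ω | X ω = S}).toReal • F S = _
  rw [hunif]
  split_ifs
  · simp [div_eq_inv_mul]
  · simp

theorem integral_one_sub_div_mul_sum_sq_of_uniform [DecidableEq α] {Ω : Type*}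
    [MeasurableSpace Ω] {μ : Measure Ω} [IsFiniteMeasure μ] {X : Ω → Finset α}
    (hX : Measurable X) {k : ℕ} (hk : 0 < k) (hkn : k ≤ card α)
    (hunif : ∀ S, μ {ω | X ω = S} = if #S = k then ((card α).choose k : ℝ≥0∞)⁻¹ else 0)
    (f : α → ℝ) (η : ℝ) :
    ∫ ω, (1 - η / k * ∑ i ∈ X ω, f i) ^ 2 ∂μ =
      1 - 2 * η * ((∑ i, f i) / card α) + η ^ 2 * (((∑ i, f i) / card α) ^ 2 +
        (card α - k) / (k * (card α - 1)) *
          ((∑ i, (f i - (∑ j, f j) / card α) ^ 2) / card α)) := by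
  rw [integral_comp_eq_sum_powersetCard_div hX hunif
    (F := fun S => (1 - η / k * ∑ i ∈ S, f i) ^ 2)]
  have hexpand (x : ℝ) : (1 - η / k * x) ^ 2 = 1 - 2 * (η / k) * x + (η / k) ^ 2 * x ^ 2 := by
    ring
  simp only [hexpand, sum_add_distrib, sum_sub_distrib, ← mul_sum, sum_const, card_powersetCard,
    card_univ, nsmul_eq_mul]
  rw [sum_powersetCard_sum, sum_powersetCard_sq_sum_eq_mean_var _ hkn]
  have hC : ((card α).choose k : ℝ) ≠ 0 := by exact_mod_cast (Nat.choose_pos hkn).ne'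
  have hk₀ : (k : ℝ) ≠ 0 := by exact_mod_cast hk.ne'
  field_simp

theorem sq_mean_add_mul_var_pos {f : α → ℝ} (hf : ∑ i, f i ≠ 0) {k : ℕ} (hkn : k ≤ card α) :
    0 < ((∑ i, f i) / card α) ^ 2 + (card α - k) / (k * (card α - 1)) *
      ((∑ i, (f i - (∑ j, f j) / card α) ^ 2) / card α) := by
  obtain ⟨i, -, -⟩ := exists_ne_zero_of_sum_ne_zero hf
  have hα : (1 : ℝ) ≤ card α := by exact_mod_cast Fintype.card_pos_iff.2 ⟨i⟩
  have hk : (k : ℝ) ≤ card α := by exact_mod_cast hkn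
  have hp : 0 ≤ (card α - k : ℝ) / (k * (card α - 1)) :=
    div_nonneg (by linarith) (mul_nonneg k.cast_nonneg (by linarith))
  have hm : (∑ i, f i) / card α ≠ 0 := div_ne_zero hf (by positivity)
  exact add_pos_of_pos_of_nonneg (sq_pos_of_ne_zero hm) (mul_nonneg hp (by positivity))

end UniformSubset

theorem le_one_of_forall_pow_le {a C : ℝ} (h : ∀ t : ℕ, a ^ t ≤ C) : a ≤ 1 :=
  not_lt.1 fun ha => (pow_unbounded_of_one_lt C ha).elim fun t ht => (h t).not_gt ht

theorem eq_prod_range_mul_of_succ {M : Type*} [CommMonoid M] {y r : ℕ → M}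
    (hy : ∀ t, y (t + 1) = r t * y t) (t : ℕ) : y t = (∏ s ∈ range t, r s) * y 0 := by
  induction t with
  | zero => simp
  | succ t ih => rw [hy, ih, prod_range_succ, mul_assoc, mul_left_comm, ← mul_assoc]

section Independence

variable {Ω β : Type*} [MeasurableSpace Ω] {μ : Measure Ω} [MeasurableSpace β]
  {X : ℕ → Ω → β} {F : β → ℝ} {a : ℝ}

theorem ProbabilityTheory.iIndepFun.integral_prod_range_comp_eq_pow
    (hX : ∀ t, Measurable (X t)) (hind : iIndepFun X μ) (hF : Measurable F)
    (ha : ∀ t, ∫ ω, F (X t ω) ∂μ = a) (t : ℕ) :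
    ∫ ω, ∏ s ∈ range t, F (X s ω) ∂μ = a ^ t := by
  have hfin := iIndepFun.integral_fun_prod_comp
    (hind.precomp (g := fun i : Fin t => (i : ℕ)) Fin.val_injective) (f := fun _ => F)
    (fun i => (hX i).aemeasurable) (fun _ => hF.aestronglyMeasurable)
  simp only [ha, prod_const, card_univ, Fintype.card_fin] at hfin
  rw [← hfin]
  congr with ω
  exact (Fin.prod_univ_eq_prod_range (fun s => F (X s ω)) t).symm

theorem integral_sq_eq_mul_pow_of_succ_eq_mul (hX : ∀ t, Measurable (X t))
    (hind : iIndepFun X μ) (hF : Measurable F) (ha : ∀ t, ∫ ω, F (X t ω) ^ 2 ∂μ = a)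
    {y : ℕ → Ω → ℝ} {y₀ : ℝ} (hy₀ : ∀ ω, y 0 ω = y₀)
    (hy : ∀ t ω, y (t + 1) ω = F (X t ω) * y t ω) (t : ℕ) :
    ∫ ω, y t ω ^ 2 ∂μ = y₀ ^ 2 * a ^ t := by
  have hprod (ω : Ω) : y t ω ^ 2 = y₀ ^ 2 * ∏ s ∈ range t, F (X s ω) ^ 2 := by
    rw [eq_prod_range_mul_of_succ (y := (y · ω)) (hy · ω) t, hy₀, mul_pow, ← prod_pow, mul_comm]
  simp_rw [hprod]
  rw [integral_const_mul, hind.integral_prod_range_comp_eq_pow hX (hF.pow_const 2) ha t]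

end Independence

/-- **Exact mean-square linear stability threshold of SGD (univariate, Wu et al.).**
With sample curvatures `h i > 0`, batches of size `B` drawn uniformly (and
independently across time) from the size-`B` subsets of `{1,…,n}`, and the
linearized iterates `x̃_{t+1} = x̃_t − (η/B) (∑_{i ∈ B_t} h_i)(x̃_t − x*)`, the
second moment `E[(x̃_t − x*)²]` is bounded for every initial point iff
`η ≤ 2h̄/(h̄² + p s²)`, with `h̄ = (1/n)∑ h_i`, `s² = (1/n)∑ (h_i − h̄)²`,
`p = (n − B)/(B(n − 1))`. -/
theorem stmt6 {n B : ℕ} (hB : 0 < B) (hBn : B ≤ n)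
    (h : Fin n → ℝ) (hpos : ∀ i, 0 < h i) (xstar : ℝ) (η : ℝ) (hη : 0 < η)
    {Ω : Type*} [MeasurableSpace Ω] (μ : Measure Ω) [IsProbabilityMeasure μ]
    (Bt : ℕ → Ω → Finset (Fin n)) (hmeas : ∀ t, Measurable (Bt t))
    (hindep : iIndepFun (m := fun _ => finsetMeasurableSpace) Bt μ)
    (hunif : ∀ t (S : Finset (Fin n)), μ {ω | Bt t ω = S} =
      if S.card = B then ((n.choose B : ℝ≥0∞))⁻¹ else 0) :
    (∀ (x0 : ℝ) (x : ℕ → Ω → ℝ), (∀ ω, x 0 ω = x0) →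
        (∀ t ω, x (t + 1) ω =
          x t ω - η / B * (∑ i ∈ Bt t ω, h i) * (x t ω - xstar)) →
        ∃ C : ℝ, ∀ t : ℕ, ∫ ω, (x t ω - xstar) ^ 2 ∂μ ≤ C) ↔
      η ≤ 2 * ((∑ i, h i) / n) /
        (((∑ i, h i) / n) ^ 2 +
          ((n : ℝ) - B) / (B * ((n : ℝ) - 1)) *
            ((∑ i, (h i - (∑ j, h j) / n) ^ 2) / n)) := by
  set m := (∑ i, h i) / n
  set D := m ^ 2 + ((n : ℝ) - B) / (B * ((n : ℝ) - 1)) * ((∑ i, (h i - m) ^ 2) / n)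
  set a := 1 - 2 * η * m + η ^ 2 * D
  have hstep (t : ℕ) : ∫ ω, (1 - η / B * ∑ i ∈ Bt t ω, h i) ^ 2 ∂μ = a := by
    simpa using integral_one_sub_div_mul_sum_sq_of_uniform (hmeas t) hB (by simpa using hBn)
      (by simpa using hunif t) h η
  have hmoment (x0 : ℝ) (x : ℕ → Ω → ℝ) (hx0 : ∀ ω, x 0 ω = x0)
      (hx : ∀ t ω, x (t + 1) ω = x t ω - η / B * (∑ i ∈ Bt t ω, h i) * (x t ω - xstar))
      (t : ℕ) : ∫ ω, (x t ω - xstar) ^ 2 ∂μ = (x0 - xstar) ^ 2 * a ^ t :=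
    integral_sq_eq_mul_pow_of_succ_eq_mul (y := fun t ω => x t ω - xstar) hmeas hindep
      (F := fun S => 1 - η / B * ∑ i ∈ S, h i) .of_discrete hstep (fun ω => by rw [hx0])
      (fun t ω => by rw [hx]; ring) t
  have hD : 0 < D := by
    simpa using sq_mean_add_mul_var_pos (sum_pos (fun i _ => hpos i)
      (univ_nonempty_iff.2 ⟨⟨0, hB.trans_le hBn⟩⟩)).ne' (by simpa using hBn)
  have ha : a ≤ 1 ↔ η ≤ 2 * m / D := by
    rw [le_div_iff₀ hD]
    constructor <;> intro hle <;> nlinarith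
  rw [← ha]
  constructor
  · intro hbdd
    obtain ⟨C, hC⟩ := hbdd (xstar + 1)
      (fun t => Nat.rec (fun _ => xstar + 1)
        (fun t xt ω => xt ω - η / B * (∑ i ∈ Bt t ω, h i) * (xt ω - xstar)) t)
      (fun _ => rfl) (fun _ _ => rfl)
    refine le_one_of_forall_pow_le (C := C) fun t => ?_
    have hCt := hC t
    rw [hmoment (xstar + 1) _ (fun _ => rfl) (fun _ _ => rfl) t] at hCt
    simpa using hCt
  · intro ha₁ x0 x hx0 hx
    have ha₀ : 0 ≤ a := hstep 0 ▸ integral_nonneg fun _ => sq_nonneg _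
    exact ⟨(x0 - xstar) ^ 2, fun t => hmoment x0 x hx0 hx t ▸
      mul_le_of_le_one_right (sq_nonneg _) (pow_le_one₀ ha₀ ha₁)⟩
end

section
/- Fix η > 2 and let ψ(x) = (1 − η)x − ηx³ be the gradient descent map with step size η on f_+(x) = x²/2 + x⁴/4. For any x_0 ≠ 0, the iterates x_{t+1} = ψ(x_t) satisfy |x_t|^{1/t} → ∞ as t → ∞, i.e., the iterates diverge at a superlinear (super-geometric) rate. -/
/-!
Writing `a_t = |x_t|`, the step reads `a_{t+1} = (η - 1 + η a_t²) a_t`. Since `η - 1 > 1` the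
sequence grows at least geometrically, hence tends to infinity; and since
`η a² - a + (η - 1) ≥ a² - a + 1 > 0`, it also satisfies `a_t² ≤ a_{t+1}`.
Once `a_T ≥ C²` with `C ≥ 1`, repeated squaring gives `a_{T+s} ≥ C^(2^(s+1)) ≥ C^(T+s)` for `s ≥ T`,
so `a_t^(1/t) ≥ C` eventually, for every `C`.
-/

open Filter

section RepeatedSquaring

variable {a : ℕ → ℝ}

theorem pow_two_pow_le_of_sq_le (hsq : ∀ t, a t ^ 2 ≤ a (t + 1)) {T : ℕ} (hT : 1 ≤ a T) (s : ℕ) :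
    a T ^ 2 ^ s ≤ a (T + s) := by
  induction s with
  | zero => simp
  | succ s ih =>
    calc a T ^ 2 ^ (s + 1) = (a T ^ 2 ^ s) ^ 2 := by rw [pow_succ, pow_mul]
      _ ≤ a (T + s) ^ 2 := pow_le_pow_left₀ (by positivity) ih 2
      _ ≤ a (T + s + 1) := hsq _

theorem eventually_pow_le_of_sq_le (hsq : ∀ t, a t ^ 2 ≤ a (t + 1))
    (ha : Tendsto a atTop atTop) {C : ℝ} (hC : 1 ≤ C) : ∀ᶠ t in atTop, C ^ t ≤ a t := by
  obtain ⟨T, hT⟩ := (ha.eventually_ge_atTop (C ^ 2)).exists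
  filter_upwards [eventually_ge_atTop (2 * T)] with t ht
  obtain ⟨s, rfl⟩ : ∃ s, t = T + s := ⟨t - T, by omega⟩
  have hexp : T + s ≤ 2 ^ (s + 1) := by
    have := s.lt_two_pow_self
    rw [pow_succ]
    omega
  calc C ^ (T + s) ≤ C ^ 2 ^ (s + 1) := pow_le_pow_right₀ hC hexp
    _ = (C ^ 2) ^ 2 ^ s := by rw [← pow_mul, pow_succ, mul_comm]
    _ ≤ a T ^ 2 ^ s := pow_le_pow_left₀ (by positivity) hT _
    _ ≤ a (T + s) := pow_two_pow_le_of_sq_le hsq ((one_le_pow₀ hC).trans hT) s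

theorem tendsto_rpow_one_div_atTop_of_sq_le (hsq : ∀ t, a t ^ 2 ≤ a (t + 1))
    (ha : Tendsto a atTop atTop) :
    Tendsto (fun t : ℕ => a t ^ (1 / (t : ℝ))) atTop atTop := by
  refine tendsto_atTop.2 fun b => ?_
  have hC : 1 ≤ max b 1 := le_max_right _ _
  filter_upwards [eventually_pow_le_of_sq_le hsq ha hC, eventually_gt_atTop 0] with t hCt ht
  have ht : (t : ℝ) ≠ 0 := by positivity
  calc b ≤ max b 1 := le_max_left _ _
    _ = (max b 1 ^ t) ^ (1 / (t : ℝ)) := by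
      rw [← Real.rpow_natCast, ← Real.rpow_mul (by positivity), mul_one_div_cancel ht,
        Real.rpow_one]
    _ ≤ a t ^ (1 / (t : ℝ)) := by gcongr

end RepeatedSquaring

theorem abs_gd_step (η y : ℝ) (hη : 1 ≤ η) :
    |(1 - η) * y - η * y ^ 3| = (η - 1 + η * y ^ 2) * |y| := by
  rw [show (1 - η) * y - η * y ^ 3 = -((η - 1 + η * y ^ 2) * y) by ring, abs_neg, abs_mul,
    abs_of_nonneg (by positivity)]

/-- **Superlinear divergence of GD on `f₊(x) = x²/2 + x⁴/4` for `η > 2`.**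
The GD map is `ψ(x) = x - η f₊'(x) = (1 - η) x - η x³`. For any `x₀ ≠ 0`,
the iterates satisfy `|x_t|^(1/t) → ∞`. -/
theorem stmt7 (η : ℝ) (hη : 2 < η) (x : ℕ → ℝ) (hx0 : x 0 ≠ 0)
    (hstep : ∀ t, x (t + 1) = (1 - η) * x t - η * (x t) ^ 3) :
    Filter.Tendsto (fun t : ℕ => |x t| ^ (1 / (t : ℝ))) Filter.atTop Filter.atTop := by
  have habs t : |x (t + 1)| = (η - 1 + η * x t ^ 2) * |x t| := by
    rw [hstep, abs_gd_step η (x t) (by linarith)]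
  have hgeom t : (η - 1) * |x t| ≤ |x (t + 1)| := by
    rw [habs]
    gcongr
    nlinarith [sq_nonneg (x t)]
  have hsq t : |x t| ^ 2 ≤ |x (t + 1)| := by
    have hfac : |x t| ≤ η - 1 + η * x t ^ 2 := by
      nlinarith [sq_abs (x t), sq_nonneg (|x t| - 1)]
    rw [habs, sq]
    gcongr
  exact tendsto_rpow_one_div_atTop_of_sq_le hsq
    (tendsto_atTop_of_geom_le (abs_pos.2 hx0) (by linarith) hgeom)
end

section
/- Fix η > 2 and let ψ(x) = (1 − η)x − ηx³ be the gradient descent map with step size η on f_+(x) = x²/2 + x⁴/4. For any initial point x_0 ∈ ℝ, the iterates x_{t+1} = ψ(x_t) satisfy |x_t| ≥ (η − 1)^t · |x_0| for all t ≥ 0. -/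
/-- **Geometric lower bound for GD iterates on `f₊(x) = x²/2 + x⁴/4` with `η > 2`.**
The GD map is `ψ(x) = x - η f₊'(x) = (1 - η) x - η x³`. For any initial point,
`|x_t| ≥ (η - 1)^t · |x₀|` for all `t ≥ 0`. -/
theorem stmt8 (η : ℝ) (hη : 2 < η) (x : ℕ → ℝ)
    (hstep : ∀ t, x (t + 1) = (1 - η) * x t - η * (x t) ^ 3) :
    ∀ t : ℕ, (η - 1) ^ t * |x 0| ≤ |x t| := by
  intro t
  induction t with
  | zero => simp
  | succ t ih =>
    have h1 : (0:ℝ) < η - 1 := by linarith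
    have key : (η - 1) * |x t| ≤ |x (t+1)| := by
      rw [hstep t]
      have h0 : (1 - η) * x t - η * (x t)^3 = x t * (1 - η - η * (x t)^2) := by ring
      rw [h0, abs_mul]
      have h2 : |1 - η - η * (x t)^2| = η - 1 + η * (x t)^2 := by
        rw [abs_of_nonpos (by nlinarith [sq_nonneg (x t)])]; ring
      rw [h2]
      nlinarith [mul_nonneg (abs_nonneg (x t)) (sq_nonneg (x t))]
    calc (η-1)^(t+1) * |x 0| = (η-1) * ((η-1)^t * |x 0|) := by ring
      _ ≤ (η-1) * |x t| := by nlinarith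
      _ ≤ |x (t+1)| := key
end

section
/- Fix η > 2 and let ψ(x) = (1 − η)x − ηx³ be the gradient descent map with step size η on f_+(x) = x²/2 + x⁴/4, with iterates x_{t+1} = ψ(x_t). Suppose T ∈ ℕ is such that (η − 1)^T · |x_0| > 2. Then for all t ≥ T, |x_t| ≥ 2^{(3^{t−T+1} − 1)/2}. -/
/-- **Doubly-exponential lower bound for GD iterates on `f₊(x) = x²/2 + x⁴/4` with `η > 2`.**
If `T` is such that `(η - 1)^T · |x₀| > 2`, then for all `t ≥ T`,
`|x_t| ≥ 2^((3^(t - T + 1) - 1)/2)`. -/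
theorem stmt9 (η : ℝ) (hη : 2 < η) (x : ℕ → ℝ)
    (hstep : ∀ t, x (t + 1) = (1 - η) * x t - η * (x t) ^ 3)
    (T : ℕ) (hT : 2 < (η - 1) ^ T * |x 0|) :
    ∀ t : ℕ, T ≤ t → (2 : ℝ) ^ ((3 ^ (t - T + 1) - 1 : ℝ) / 2) ≤ |x t| := by
  have habs : ∀ t, |x (t+1)| = |x t| * ((η - 1) + η * (x t)^2) := by
    intro t
    have h1 : x (t+1) = x t * (-((η - 1) + η * (x t)^2)) := by
      rw [hstep t]; ring
    rw [h1, abs_mul, abs_neg,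
      abs_of_nonneg (a := (η - 1) + η * (x t)^2) (by nlinarith [sq_nonneg (x t)])]
  have hgrow : ∀ t, (η - 1) ^ t * |x 0| ≤ |x t| := by
    intro t
    induction t with
    | zero => simp
    | succ t ih =>
      calc (η-1)^(t+1) * |x 0| = (η-1) * ((η-1)^t * |x 0|) := by ring
        _ ≤ (η-1) * |x t| := mul_le_mul_of_nonneg_left ih (by linarith)
        _ ≤ |x t| * ((η-1) + η * (x t)^2) := by
            have hp : (0:ℝ) ≤ |x t| * (η * (x t)^2) := by positivity
            nlinarith [hp]
        _ = |x (t+1)| := (habs t).symm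
  intro t ht
  induction t, ht using Nat.le_induction with
  | base =>
    have h2 : (2:ℝ) ≤ |x T| := le_trans (le_of_lt hT) (hgrow T)
    simp only [Nat.sub_self]
    norm_num
    exact h2
  | succ t ht ih =>
    have hsub : t + 1 - T = (t - T) + 1 := by omega
    set e : ℝ := ((3:ℝ) ^ (t - T + 1) - 1) / 2 with he
    have hkey : (2:ℝ) ^ (((3:ℝ) ^ (t + 1 - T + 1) - 1) / 2) = 2 * ((2:ℝ) ^ e) ^ 3 := by
      rw [hsub]
      have h3 : (3:ℝ) ^ (t - T + 1 + 1) = 3 * (3:ℝ) ^ (t - T + 1) := by ring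
      rw [h3]
      have hc : ((2:ℝ) ^ e) ^ (3:ℕ) = (2:ℝ) ^ (e * 3) := by
        rw [← Real.rpow_natCast ((2:ℝ) ^ e) 3, ← Real.rpow_mul (by norm_num)]
        norm_num
      have hexp : (3 * (3:ℝ) ^ (t - T + 1) - 1) / 2 = e * 3 + 1 := by
        rw [he]; ring
      rw [hc, hexp, Real.rpow_add (by norm_num), Real.rpow_one, mul_comm]
    rw [hkey]
    have hpos : (0:ℝ) ≤ (2:ℝ) ^ e := Real.rpow_nonneg (by norm_num) e
    have hcube : ((2:ℝ) ^ e) ^ 3 ≤ |x t| ^ 3 := pow_le_pow_left₀ hpos ih 3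
    rw [habs t]
    have hcube3 : |x t| ^ 3 = |x t| * (x t)^2 := by
      rw [← sq_abs]; ring
    have ha := abs_nonneg (x t)
    have hsq := sq_nonneg (x t)
    have h1 : (0:ℝ) ≤ (η - 2) * (|x t| * (x t)^2) :=
      mul_nonneg (by linarith) (mul_nonneg ha hsq)
    have h2 : (0:ℝ) ≤ (η - 1) * |x t| := mul_nonneg (by linarith) ha
    nlinarith [hcube, hcube3, h1, h2]
end

section
/- Fix η ∈ (2, 3) and let ψ(x) = (1 − η)x + ηx³ be the gradient descent map with step size η on f_−(x) = x²/2 − x⁴/4. Let c = √((η − 2)/η). Then c > 0, ψ(c) = −c and ψ(−c) = c, so {c, −c} is a period-2 cycle of ψ, and the derivative of ψ∘ψ at c equals (2η − 5)², which is strictly less than 1; hence the cycle is linearly stable. -/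
/-!
Write `ψ(x) = (1 - η) x + η x³`. The map is odd, so `ψ c = -c` already gives the 2-cycle
`{c, -c}`, and `ψ c = -c` for `c ≠ 0` says exactly `η c² = η - 2`. Since `ψ'` is even,
`(ψ ∘ ψ)'(c) = ψ'(-c) ψ'(c) = ψ'(c)²`, and on the cycle `ψ'(c) = 1 - η + 3 η c² = 2η - 5`,
which lies in `(-1, 1)` exactly for `η ∈ (2, 3)`.
-/

namespace QuarticGD

/-- The gradient descent map of `x ↦ x² / 2 - x⁴ / 4` with step size `η`. -/
def gdMap (η x : ℝ) : ℝ := (1 - η) * x + η * x ^ 3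

variable {η c : ℝ}

theorem gdMap_neg (η x : ℝ) : gdMap η (-x) = -gdMap η x := by
  unfold gdMap; ring

theorem hasDerivAt_gdMap (η x : ℝ) : HasDerivAt (gdMap η) (1 - η + 3 * η * x ^ 2) x := by
  have h := ((hasDerivAt_id' x).const_mul (1 - η)).add ((hasDerivAt_pow 3 x).const_mul η)
  exact h.congr_deriv (by norm_num; ring)

theorem gdMap_eq_neg_self (h : η * c ^ 2 = η - 2) : gdMap η c = -c := by
  unfold gdMap
  linear_combination c * h

theorem gdMap_neg_eq_self (h : η * c ^ 2 = η - 2) : gdMap η (-c) = c := by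
  rw [gdMap_neg, gdMap_eq_neg_self h, neg_neg]

theorem hasDerivAt_gdMap_comp_self (h : η * c ^ 2 = η - 2) :
    HasDerivAt (gdMap η ∘ gdMap η) ((2 * η - 5) ^ 2) c := by
  have hslope : 1 - η + 3 * η * c ^ 2 = 2 * η - 5 := by linear_combination 3 * h
  have h' := (hasDerivAt_gdMap η (gdMap η c)).comp c (hasDerivAt_gdMap η c)
  rwa [gdMap_eq_neg_self h, neg_sq, hslope, ← sq] at h'

end QuarticGD

/-- **Explicit stable period-2 cycle of GD on `f₋(x) = x²/2 - x⁴/4` for `η ∈ (2,3)`.**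
The GD map is `ψ(x) = (1 - η) x + η x³`. With `c = √((η-2)/η)` we have `c > 0`,
`ψ(c) = -c`, `ψ(-c) = c` (a period-2 cycle), and `(ψ ∘ ψ)'(c) = (2η - 5)² < 1`,
so the cycle is linearly stable. -/
theorem stmt10 (η : ℝ) (hη1 : 2 < η) (hη2 : η < 3) :
    let ψ : ℝ → ℝ := fun x => (1 - η) * x + η * x ^ 3
    let c : ℝ := Real.sqrt ((η - 2) / η)
    0 < c ∧ ψ c = -c ∧ ψ (-c) = c ∧
      deriv (ψ ∘ ψ) c = (2 * η - 5) ^ 2 ∧ (2 * η - 5) ^ 2 < 1 := by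
  intro ψ c
  have hηpos : 0 < η := by linarith
  have harg : 0 < (η - 2) / η := div_pos (by linarith) hηpos
  have hcycle : η * c ^ 2 = η - 2 := by
    rw [Real.sq_sqrt harg.le]; field_simp
  refine ⟨Real.sqrt_pos.mpr harg, QuarticGD.gdMap_eq_neg_self hcycle,
    QuarticGD.gdMap_neg_eq_self hcycle, (QuarticGD.hasDerivAt_gdMap_comp_self hcycle).deriv, ?_⟩
  nlinarith
end

section
/- Let X be a real random variable taking values in a finite set S ⊂ [0, ∞), and suppose P(X > 2) > 0. Then |E[(1 − X)^k]| → ∞ as k → ∞. -/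
/-!
Split `E[(1 - X)^k]` over `{X ≤ 2}` and `{X > 2}`. On the first set `|1 - X| ≤ 1`, so that part
stays bounded by `1`. On the second set `(1 - X)^k` has the constant sign `(-1)^k`, and because
`X` takes only finitely many values there is a gap `m > 2` with `X ≥ m` there; hence that part
has absolute value at least `P(X > 2) (m - 1)^k → ∞`.
-/

open MeasureTheory Filter

theorem Finset.exists_gt_forall_le_or_le {α : Type*} [LinearOrder α] [NoMaxOrder α]
    (S : Finset α) (a : α) : ∃ m, a < m ∧ ∀ y ∈ S, y ≤ a ∨ m ≤ y := by
  classical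
  obtain ⟨b, hab⟩ := exists_gt a
  set T := insert b (S.filter (a < ·))
  have hT : T.Nonempty := Finset.insert_nonempty _ _
  refine ⟨T.min' hT, (T.lt_min'_iff hT).2 fun z hz => ?_, fun y hy => ?_⟩
  · rcases Finset.mem_insert.1 hz with rfl | hz
    · exact hab
    · exact (Finset.mem_filter.1 hz).2
  · refine (le_or_gt y a).imp_right fun hay => T.min'_le y ?_
    exact Finset.mem_insert_of_mem (Finset.mem_filter.2 ⟨hy, hay⟩)

section

variable {Ω : Type*} [MeasurableSpace Ω] {μ : Measure Ω}

theorem integrable_comp_of_forall_mem_finset {α : Type*} [MeasurableSpace α] [IsFiniteMeasure μ]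
    {X : Ω → α} (hX : Measurable X) {S : Finset α} (hXS : ∀ ω, X ω ∈ S) {g : α → ℝ}
    (hg : Measurable g) : Integrable (fun ω => g (X ω)) μ :=
  Integrable.of_bound (hg.comp hX).aestronglyMeasurable (∑ y ∈ S, ‖g y‖) <|
    .of_forall fun ω =>
      Finset.single_le_sum (f := fun y => ‖g y‖) (fun _ _ => norm_nonneg _) (hXS ω)

theorem abs_setIntegral_sub_abs_setIntegral_compl_le {f : Ω → ℝ} (hf : Integrable f μ)
    {s : Set Ω} (hs : MeasurableSet s) :
    |∫ ω in s, f ω ∂μ| - |∫ ω in sᶜ, f ω ∂μ| ≤ |∫ ω, f ω ∂μ| := by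
  simpa [← integral_add_compl hs hf] using
    abs_sub_abs_le_abs_sub (∫ ω in s, f ω ∂μ) (-∫ ω in sᶜ, f ω ∂μ)

theorem abs_one_sub_pow_le_one {x : ℝ} (hx₀ : 0 ≤ x) (hx₂ : x ≤ 2) (k : ℕ) :
    |(1 - x) ^ k| ≤ 1 := by
  rw [abs_pow]
  exact pow_le_one₀ (abs_nonneg _) (abs_le.2 ⟨by linarith, by linarith⟩)

theorem sub_one_le_abs_integral_one_sub_pow [IsProbabilityMeasure μ] {X : Ω → ℝ}
    (hX : Measurable X) (hX₀ : ∀ ω, 0 ≤ X ω) {m : ℝ} (hm : 2 ≤ m)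
    (hgap : ∀ ω, X ω ≤ 2 ∨ m ≤ X ω) {k : ℕ}
    (hint : Integrable (fun ω => (1 - X ω) ^ k) μ) :
    μ.real {ω | 2 < X ω} * (m - 1) ^ k - 1 ≤ |∫ ω, (1 - X ω) ^ k ∂μ| := by
  set s := {ω | 2 < X ω}
  have hs : MeasurableSet s := measurableSet_lt measurable_const hX
  have hlarge : μ.real s * (m - 1) ^ k ≤ |∫ ω in s, (1 - X ω) ^ k ∂μ| := by
    have hsign : ∀ ω, (1 - X ω) ^ k = (-1) ^ k * (X ω - 1) ^ k := fun ω => by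
      rw [← mul_pow]; ring_nf
    simp_rw [hsign, integral_const_mul, abs_mul, abs_pow, abs_neg, abs_one, one_pow, one_mul]
    refine le_trans ?_ (le_abs_self _)
    rw [mul_comm]
    refine setIntegral_ge_of_const_le_real hs (measure_ne_top μ s) (fun ω hω => ?_) ?_
    · have : m ≤ X ω := (hgap ω).resolve_left (not_le.2 hω)
      exact pow_le_pow_left₀ (by linarith) (by linarith) k
    · have := (hint.const_mul ((-1) ^ k)).integrableOn (s := s)
      simpa [← mul_assoc, ← mul_pow] using this
  have hsmall : |∫ ω in sᶜ, (1 - X ω) ^ k ∂μ| ≤ 1 :=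
    calc |∫ ω in sᶜ, (1 - X ω) ^ k ∂μ| ≤ 1 * μ.real sᶜ := by
          rw [← Real.norm_eq_abs]
          exact norm_setIntegral_le_of_norm_le_const (measure_lt_top μ _) fun ω hω =>
            abs_one_sub_pow_le_one (hX₀ ω) (not_lt.1 hω) k
      _ ≤ 1 := by rw [one_mul]; exact measureReal_le_one
  linarith [abs_setIntegral_sub_abs_setIntegral_compl_le hint hs]

end

/-- **Divergence of signed power moments.**
If `X` is a random variable taking values in a finite set `S ⊆ [0, ∞)` and
`P(X > 2) > 0`, then `|E[(1 − X)^k]| → ∞` as `k → ∞`. -/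
theorem stmt14 {Ω : Type*} [MeasurableSpace Ω] (μ : Measure Ω) [IsProbabilityMeasure μ]
    (X : Ω → ℝ) (hX : Measurable X) (S : Finset ℝ)
    (hXS : ∀ ω, X ω ∈ S) (hS : ∀ y ∈ S, 0 ≤ y)
    (hP : 0 < μ {ω | 2 < X ω}) :
    Tendsto (fun k : ℕ => |∫ ω, (1 - X ω) ^ k ∂μ|) atTop atTop := by
  obtain ⟨m, hm, hgap⟩ := S.exists_gt_forall_le_or_le 2
  have hP' : 0 < μ.real {ω | 2 < X ω} := ENNReal.toReal_pos hP.ne' (measure_ne_top μ _)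
  have hlower (k : ℕ) := sub_one_le_abs_integral_one_sub_pow hX (fun ω => hS _ (hXS ω)) hm.le
    (fun ω => hgap _ (hXS ω)) <|
    integrable_comp_of_forall_mem_finset (μ := μ) hX hXS (g := fun x => (1 - x) ^ k) (by fun_prop)
  refine tendsto_atTop_mono hlower (tendsto_atTop_add_const_right _ (-1) ?_)
  exact (tendsto_pow_atTop_atTop_of_one_lt (by linarith)).const_mul_atTop hP'
end

section
/- Let H_1, …, H_N be symmetric positive semidefinite d×d real matrices, let H be a random matrix uniform on {H_1, …, H_N}, and let η > 0. Suppose η·λ_max(H_i) > 2 for some i. Then ‖E[(I − ηH)^{⊗k}]‖ → ∞ as k → ∞, where (·)^{⊗k} denotes the k-th Kronecker power and ‖·‖ the operator (spectral) norm. -/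
/-!
Test the operator against the unit vector `u^{⊗k}`, where `u` witnesses the instability of `H_i`.
Its quadratic form factorises over the Kronecker power, so it equals the average of `t_j ^ k`
with `t_j = ⟨u, (I - ηH_j) u⟩`. Positive semidefiniteness gives `t_j ≤ 1` for all `j`, while
`t_i < -1`. For even `k` the term `t_i ^ k` dominates a sum of nonnegative terms; for odd `k` it
is a very negative term among terms that are at most `1`. Either way the average is at least
`(|t_i| ^ k - N) / N` in absolute value, which tends to infinity.
-/

open Filter Matrix

/-- The `k`-th Kronecker power of a `d × d` matrix, indexed by functions
`Fin k → Fin d`: `(A^{⊗k})_{f,g} = ∏ j, A (f j) (g j)`. -/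
def kronPow {d : ℕ} (A : Matrix (Fin d) (Fin d) ℝ) (k : ℕ) :
    Matrix (Fin k → Fin d) (Fin k → Fin d) ℝ :=
  Matrix.of fun f g => ∏ j, A (f j) (g j)

open scoped RealInnerProductSpace

def kronVec {d : ℕ} (u : Fin d → ℝ) (k : ℕ) : (Fin k → Fin d) → ℝ :=
  fun f => ∏ j, u (f j)

theorem kronVec_dotProduct_kronPow_mulVec {d k : ℕ} (A : Matrix (Fin d) (Fin d) ℝ)
    (u w : Fin d → ℝ) :
    kronVec u k ⬝ᵥ kronPow A k *ᵥ kronVec w k = (u ⬝ᵥ A *ᵥ w) ^ k := by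
  simp only [dotProduct, mulVec, Fintype.sum_pow, Finset.prod_mul_distrib, Fintype.prod_sum,
    kronVec, kronPow, of_apply, Finset.mul_sum]

theorem kronVec_dotProduct_kronVec {d k : ℕ} (u w : Fin d → ℝ) :
    kronVec u k ⬝ᵥ kronVec w k = (u ⬝ᵥ w) ^ k := by
  simp only [dotProduct, Fintype.sum_pow, Finset.prod_mul_distrib, kronVec]

theorem abs_dotProduct_mulVec_le_norm_toEuclideanCLM {n : Type*} [Fintype n] [DecidableEq n]
    (M : Matrix n n ℝ) (v : n → ℝ) :
    |v ⬝ᵥ M *ᵥ v| ≤ ‖toEuclideanCLM (𝕜 := ℝ) M‖ * (v ⬝ᵥ v) := by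
  set x : EuclideanSpace ℝ n := WithLp.toLp 2 v
  have hx : ‖x‖ ^ 2 = v ⬝ᵥ v := by
    rw [← real_inner_self_eq_norm_sq, EuclideanSpace.inner_toLp_toLp, star_trivial]
  calc |v ⬝ᵥ M *ᵥ v| = |⟪x, toEuclideanCLM (𝕜 := ℝ) M x⟫| := by rw [inner_toEuclideanCLM]
    _ ≤ ‖x‖ * ‖toEuclideanCLM (𝕜 := ℝ) M x‖ := abs_real_inner_le_norm _ _
    _ ≤ ‖x‖ * (‖toEuclideanCLM (𝕜 := ℝ) M‖ * ‖x‖) := by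
      gcongr; exact ContinuousLinearMap.le_opNorm _ _
    _ = ‖toEuclideanCLM (𝕜 := ℝ) M‖ * (v ⬝ᵥ v) := by rw [← hx]; ring

theorem le_norm_toEuclideanCLM_smul_sum_kronPow {ι : Type*} [Fintype ι] {d k : ℕ}
    (c : ℝ) (A : ι → Matrix (Fin d) (Fin d) ℝ) {u : Fin d → ℝ} (hu : u ⬝ᵥ u = 1) :
    |c| * |∑ j, (u ⬝ᵥ A j *ᵥ u) ^ k| ≤
      ‖toEuclideanCLM (𝕜 := ℝ) (c • ∑ j, kronPow (A j) k)‖ := by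
  have hquad : kronVec u k ⬝ᵥ (c • ∑ j, kronPow (A j) k) *ᵥ kronVec u k =
      c * ∑ j, (u ⬝ᵥ A j *ᵥ u) ^ k := by
    simp only [smul_mulVec, sum_mulVec, dotProduct_smul, dotProduct_sum,
      kronVec_dotProduct_kronPow_mulVec, smul_eq_mul]
  simpa [hquad, kronVec_dotProduct_kronVec, hu, abs_mul] using
    abs_dotProduct_mulVec_le_norm_toEuclideanCLM (c • ∑ j, kronPow (A j) k) (kronVec u k)

theorem pow_abs_sub_card_le_abs_sum_pow {ι : Type*} [Fintype ι] {t : ι → ℝ} (hle : ∀ j, t j ≤ 1)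
    {i : ι} (hi : t i < 0) (k : ℕ) :
    |t i| ^ k - Fintype.card ι ≤ |∑ j, t j ^ k| := by
  rcases Nat.even_or_odd k with hk | hk
  · have hsum : t i ^ k ≤ ∑ j, t j ^ k :=
      Finset.single_le_sum (fun j _ => hk.pow_nonneg (t j)) (Finset.mem_univ i)
    rw [hk.pow_abs]
    linarith [le_abs_self (∑ j, t j ^ k), (Fintype.card ι).cast_nonneg (α := ℝ)]
  · have hpow (j : ι) : t j ^ k ≤ 1 := by simpa using hk.pow_le_pow.mpr (hle j)
    have hdefect : 1 - t i ^ k ≤ ∑ j, (1 - t j ^ k) :=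
      Finset.single_le_sum (fun j _ => sub_nonneg.mpr (hpow j)) (Finset.mem_univ i)
    have hti : t i ^ k = -|t i| ^ k := by rw [abs_of_neg hi, hk.neg_pow, neg_neg]
    rw [Finset.sum_sub_distrib, Finset.sum_const, Finset.card_univ, nsmul_one] at hdefect
    linarith [neg_abs_le (∑ j, t j ^ k)]

theorem tendsto_abs_sum_pow_atTop {ι : Type*} [Fintype ι] {t : ι → ℝ} (hle : ∀ j, t j ≤ 1)
    {i : ι} (hi : t i < -1) :
    Tendsto (fun k => |∑ j, t j ^ k|) atTop atTop := by
  have hgrow : Tendsto (fun k => |t i| ^ k - Fintype.card ι) atTop atTop :=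
    tendsto_atTop_add_const_right _ _
      (tendsto_pow_atTop_atTop_of_one_lt (by rw [abs_of_neg (by linarith)]; linarith))
  exact tendsto_atTop_mono (pow_abs_sub_card_le_abs_sum_pow hle (by linarith)) hgrow

theorem stmt15_general {d N : ℕ}
    (H : Fin N → Matrix (Fin d) (Fin d) ℝ) (hpsd : ∀ i, (H i).PosSemidef)
    (η : ℝ) (hη : 0 < η)
    (hunstable : ∃ (i : Fin N) (u : Fin d → ℝ),
      u ⬝ᵥ u = 1 ∧ 2 < η * (u ⬝ᵥ (H i).mulVec u)) :
    Tendsto (fun k : ℕ =>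
        ‖Matrix.toEuclideanCLM (𝕜 := ℝ)
          ((N : ℝ)⁻¹ • ∑ i, kronPow ((1 : Matrix (Fin d) (Fin d) ℝ) - η • H i) k)‖)
      atTop atTop := by
  obtain ⟨i, u, hu, hlarge⟩ := hunstable
  set t : Fin N → ℝ := fun j => u ⬝ᵥ (1 - η • H j) *ᵥ u
  have ht (j : Fin N) : t j = 1 - η * (u ⬝ᵥ H j *ᵥ u) := by
    simp [t, sub_mulVec, smul_mulVec, dotProduct_sub, hu]
  have hle (j : Fin N) : t j ≤ 1 := by
    have hform : 0 ≤ u ⬝ᵥ H j *ᵥ u := by simpa using (hpsd j).dotProduct_mulVec_nonneg u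
    rw [ht]
    nlinarith
  have hi : t i < -1 := by rw [ht]; linarith
  have hN : (0 : ℝ) < |(N : ℝ)⁻¹| := by simpa using i.pos
  exact tendsto_atTop_mono (fun k => le_norm_toEuclideanCLM_smul_sum_kronPow _ _ hu)
    ((tendsto_abs_sum_pow_atTop hle hi).const_mul_atTop hN)

/-- **Unboundedness of the moment-operator blocks when one batch is linearly unstable.**
Let `H₁, …, H_N` be symmetric PSD matrices, `H` uniform on them, `η > 0`.  If
`η λmax(H_i) > 2` for some `i` (expressed via the quadratic form: there is a unit
vector `u` with `η ⟨u, H_i u⟩ > 2`), then the spectral norms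
`‖E[(I − ηH)^{⊗k}]‖` tend to infinity with `k`; the expectation is the uniform
average `(1/N) ∑ i (I − η H_i)^{⊗k}`. -/
theorem stmt15 {d N : ℕ} (hN : 0 < N)
    (H : Fin N → Matrix (Fin d) (Fin d) ℝ) (hpsd : ∀ i, (H i).PosSemidef)
    (η : ℝ) (hη : 0 < η)
    (hunstable : ∃ (i : Fin N) (u : Fin d → ℝ),
      u ⬝ᵥ u = 1 ∧ 2 < η * (u ⬝ᵥ (H i).mulVec u)) :
    Tendsto (fun k : ℕ =>
        ‖Matrix.toEuclideanCLM (𝕜 := ℝ)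
          ((N : ℝ)⁻¹ • ∑ i, kronPow ((1 : Matrix (Fin d) (Fin d) ℝ) - η • H i) k)‖)
      atTop atTop :=
  stmt15_general H hpsd η hη hunstable
end
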